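/- arXiv:0711.1609 — 6 statements merged into one kernel-verified Lean document; each statement's English description precedes it below -/
import Mathlib

section
/- If p : I → (0,∞) satisfies Σ_{i∈I} p(i) = 1, then the baseline cell probability satisfies p(i*) = (1 + Σ_{∅≠E⊆V} Σ_{i_E∈I_E*} exp(Σ_{∅≠F⊆E} θ_F(i_F)))^{−1}, where the outer sum runs over nonempty subsets E of V and over tuples i_E all of whose coordinates differ from baseline. -/
open Finset

/-- The cell equal to `i` on `F` and to the baseline `b` off `F`. -/
def cellOn {V : Type} [DecidableEq V] {I : V → Type} (b : ∀ γ, I γ)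
    (F : Finset V) (i : ∀ γ, I γ) : ∀ γ, I γ :=
  fun γ => if γ ∈ F then i γ else b γ

/-- The support of a cell: the set of coordinates that are off baseline. -/
def cellSupport {V : Type} [Fintype V] [DecidableEq V] {I : V → Type}
    [∀ γ, DecidableEq (I γ)] (b : ∀ γ, I γ) (j : ∀ γ, I γ) : Finset V :=
  Finset.univ.filter (fun γ => j γ ≠ b γ)

/-- The log-linear interaction parameter `θ_E(i_E)` under baseline constraints. -/
noncomputable def theta {V : Type} [DecidableEq V] {I : V → Type} (b : ∀ γ, I γ)
    (p : (∀ γ, I γ) → ℝ) (E : Finset V) (i : ∀ γ, I γ) : ℝ :=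
  ∑ F ∈ E.powerset, (-1 : ℝ) ^ (E \ F).card * Real.log (p (cellOn b F i))

/-!
By Möbius inversion on the Boolean lattice, `∑_{F ⊆ E} θ_F(i) = log p(i_E, i*)`, and
`θ_∅ = log p(i*)`. Hence for a cell `j` with support `E` the inner exponential is
`p j / p(i*)`. Every cell has exactly one support and only the baseline cell has empty support,
so the bracket equals `∑_j p j / p(i*) = 1 / p(i*)`.
-/

section MoebiusInversion

variable {α R : Type*} [DecidableEq α] [Ring R]

lemma sum_Icc_neg_one_pow_card_sdiff {G E : Finset α} (hGE : G ⊆ E) :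
    ∑ F ∈ Icc G E, (-1 : R) ^ #(F \ G) = if G = E then 1 else 0 := by
  have hunion : ∀ H ∈ (E \ G).powerset, (G ∪ H) \ G = H := fun H hH =>
    union_sdiff_cancel_left
      (disjoint_of_subset_left (mem_powerset.1 hH) disjoint_sdiff_self_left).symm
  rw [Icc_eq_image_powerset hGE,
    sum_image fun H₁ h₁ H₂ h₂ h => by rw [← hunion H₁ h₁, ← hunion H₂ h₂, h],
    sum_congr rfl fun H hH => by rw [hunion H hH]]
  have halt := congrArg (Int.cast : ℤ → R) (sum_powerset_neg_one_pow_card (x := E \ G))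
  push_cast at halt
  rw [halt]
  refine if_congr ?_ rfl rfl
  rw [sdiff_eq_empty_iff_subset]
  exact ⟨fun h => h.antisymm' hGE, fun h => h ▸ subset_rfl⟩

theorem sum_powerset_sum_powerset_neg_one_pow_mul (f : Finset α → R) (E : Finset α) :
    ∑ F ∈ E.powerset, ∑ G ∈ F.powerset, (-1 : R) ^ #(F \ G) * f G = f E := by
  calc ∑ F ∈ E.powerset, ∑ G ∈ F.powerset, (-1 : R) ^ #(F \ G) * f G
      = ∑ G ∈ E.powerset, ∑ F ∈ Icc G E, (-1 : R) ^ #(F \ G) * f G :=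
        sum_comm' fun F G => by
          simp only [mem_powerset, mem_Icc]
          exact ⟨fun h => ⟨⟨h.2, h.1⟩, h.2.trans h.1⟩, fun h => ⟨h.1.2, h.1.1⟩⟩
    _ = ∑ G ∈ E.powerset, (if G = E then 1 else 0) * f G :=
        sum_congr rfl fun G hG => by
          rw [← sum_mul, sum_Icc_neg_one_pow_card_sdiff (mem_powerset.1 hG)]
    _ = f E := by simp

end MoebiusInversion

section Cells

variable {V : Type} [DecidableEq V] {I : V → Type} (b : ∀ γ, I γ)

@[simp]
lemma cellOn_empty (i : ∀ γ, I γ) : cellOn b ∅ i = b := by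
  funext γ
  simp [cellOn]

lemma cellOn_cellSupport [Fintype V] [∀ γ, DecidableEq (I γ)] (j : ∀ γ, I γ) :
    cellOn b (cellSupport b j) j = j := by
  funext γ
  by_cases h : j γ = b γ <;> simp [cellOn, cellSupport, h]

lemma cellSupport_eq_empty_iff [Fintype V] [∀ γ, DecidableEq (I γ)] {j : ∀ γ, I γ} :
    cellSupport b j = ∅ ↔ j = b := by
  simp [cellSupport, filter_eq_empty_iff, funext_iff]

lemma theta_empty (p : (∀ γ, I γ) → ℝ) (i : ∀ γ, I γ) :
    theta b p ∅ i = Real.log (p b) := by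
  simp [theta]

lemma sum_powerset_theta (p : (∀ γ, I γ) → ℝ) (E : Finset V) (i : ∀ γ, I γ) :
    ∑ F ∈ E.powerset, theta b p F i = Real.log (p (cellOn b E i)) :=
  sum_powerset_sum_powerset_neg_one_pow_mul (fun F => Real.log (p (cellOn b F i))) E

lemma exp_sum_theta_eq_div [Fintype V] [∀ γ, DecidableEq (I γ)] {p : (∀ γ, I γ) → ℝ}
    (hp : ∀ i, 0 < p i) {E : Finset V} {j : ∀ γ, I γ} (hj : cellSupport b j = E) :
    Real.exp (∑ F ∈ E.powerset.filter (· ≠ ∅), theta b p F j) = p j / p b := by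
  rw [filter_ne', sum_erase_eq_sub (empty_mem_powerset E), sum_powerset_theta, theta_empty,
    ← hj, cellOn_cellSupport, Real.exp_sub, Real.exp_log (hp j), Real.exp_log (hp b)]

end Cells

/-- A tuple `i_E ∈ I_E*` is represented by the unique cell whose support is exactly `E`. -/
theorem baseline_prob_eq {V : Type} [Fintype V] [DecidableEq V]
    {I : V → Type} [∀ γ, Fintype (I γ)] [∀ γ, DecidableEq (I γ)]
    (b : ∀ γ, I γ) (p : (∀ γ, I γ) → ℝ) (hp : ∀ i, 0 < p i)
    (hsum : ∑ i : (∀ γ, I γ), p i = 1) :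
    p b = (1 + ∑ E ∈ (Finset.univ : Finset V).powerset.filter (· ≠ ∅),
      ∑ j ∈ Finset.univ.filter (fun j : (∀ γ, I γ) => cellSupport b j = E),
        Real.exp (∑ F ∈ E.powerset.filter (· ≠ ∅), theta b p F j))⁻¹ := by
  have hfiber : ∀ E : Finset V,
      ∑ j ∈ univ.filter (fun j : (∀ γ, I γ) => cellSupport b j = E),
        Real.exp (∑ F ∈ E.powerset.filter (· ≠ ∅), theta b p F j)
      = ∑ j ∈ univ.filter (fun j : (∀ γ, I γ) => cellSupport b j = E), p j / p b :=
    fun E => sum_congr rfl fun j hj => exp_sum_theta_eq_div b hp (mem_filter.1 hj).2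
  have hempty : univ.filter (fun j : (∀ γ, I γ) => cellSupport b j = ∅) = {b} := by
    ext j
    simp [cellSupport_eq_empty_iff]
  -- The `E = ∅` fibre is `{b}` and contributes the `1`, so the bracket is a sum over all cells.
  rw [filter_ne', sum_erase_eq_sub (empty_mem_powerset _), hfiber ∅, hempty, sum_singleton,
    div_self (hp b).ne', add_sub_cancel]
  simp_rw [hfiber, powerset_univ, sum_fiberwise, ← sum_div, hsum, one_div, inv_inv]
end

section
/- Let 𝒟 be a generating class on V, let θ : T → ℝ, and let p_θ be the associated hierarchical log-linear probability function. Then for every nonempty E ⊆ V and every i_E ∈ I_E*, the interaction parameter computed from p_θ satisfies Σ_{F⊆E} (−1)^{|E∖F|} log p_θ(i_F, i*_{F^c}) = θ(E, i_E) if E ∈ 𝒟, and = 0 if E ∉ 𝒟. -/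
open Finset MeasureTheory

/-- A generating class: a nonempty collection of nonempty subsets of `V` closed
under nonempty subsets. -/
def IsGenClass {V : Type} [DecidableEq V] (𝒟 : Finset (Finset V)) : Prop :=
  𝒟.Nonempty ∧ (∀ D ∈ 𝒟, D ≠ ∅) ∧ ∀ D ∈ 𝒟, ∀ F ⊆ D, F ≠ ∅ → F ∈ 𝒟

/-- The index set `T = {(D, i_D) : D ∈ 𝒟, i_D ∈ I_D*}`; a tuple `i_D ∈ I_D*` is
represented by the unique cell whose support is exactly `D`. -/
def TParam {V : Type} [Fintype V] [DecidableEq V] (I : V → Type)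
    [∀ γ, DecidableEq (I γ)] (b : ∀ γ, I γ) (𝒟 : Finset (Finset V)) : Type :=
  {x : Finset V × (∀ γ, I γ) // x.1 ∈ 𝒟 ∧ cellSupport b x.2 = x.1}

noncomputable instance {V : Type} [Fintype V] [DecidableEq V] (I : V → Type)
    [∀ γ, Fintype (I γ)] [∀ γ, DecidableEq (I γ)] (b : ∀ γ, I γ)
    (𝒟 : Finset (Finset V)) : Fintype (TParam I b 𝒟) := by
  unfold TParam; infer_instance

instance {V : Type} [Fintype V] [DecidableEq V] (I : V → Type)
    [∀ γ, DecidableEq (I γ)] (b : ∀ γ, I γ)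
    (𝒟 : Finset (Finset V)) : DecidableEq (TParam I b 𝒟) := by
  unfold TParam; infer_instance

/-- The exponent `Σ_{F ∈ 𝒟, F ⊆ S(j)} θ(F, j_F)` of the hierarchical model. -/
noncomputable def energy {V : Type} [Fintype V] [DecidableEq V] {I : V → Type}
    [∀ γ, Fintype (I γ)] [∀ γ, DecidableEq (I γ)] (b : ∀ γ, I γ)
    (𝒟 : Finset (Finset V)) (θ : TParam I b 𝒟 → ℝ) (j : ∀ γ, I γ) : ℝ :=
  ∑ t : TParam I b 𝒟, if t.1.2 = cellOn b t.1.1 j then θ t else 0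

/-- The partition function `Z(θ)`. -/
noncomputable def Zfun {V : Type} [Fintype V] [DecidableEq V] {I : V → Type}
    [∀ γ, Fintype (I γ)] [∀ γ, DecidableEq (I γ)] (b : ∀ γ, I γ)
    (𝒟 : Finset (Finset V)) (θ : TParam I b 𝒟 → ℝ) : ℝ :=
  ∑ j : (∀ γ, I γ), Real.exp (energy b 𝒟 θ j)

/-- The log-partition function `k(θ) = log Z(θ)`. -/
noncomputable def kfun {V : Type} [Fintype V] [DecidableEq V] {I : V → Type}
    [∀ γ, Fintype (I γ)] [∀ γ, DecidableEq (I γ)] (b : ∀ γ, I γ)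
    (𝒟 : Finset (Finset V)) (θ : TParam I b 𝒟 → ℝ) : ℝ :=
  Real.log (Zfun b 𝒟 θ)

/-- The hierarchical log-linear probability function `p_θ`. -/
noncomputable def phier {V : Type} [Fintype V] [DecidableEq V] {I : V → Type}
    [∀ γ, Fintype (I γ)] [∀ γ, DecidableEq (I γ)] (b : ∀ γ, I γ)
    (𝒟 : Finset (Finset V)) (θ : TParam I b 𝒟 → ℝ) (j : ∀ γ, I γ) : ℝ :=
  Real.exp (energy b 𝒟 θ j) / Zfun b 𝒟 θ


lemma alt_sum_real {V : Type} [DecidableEq V] (E D : Finset V) :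
    ∑ F ∈ E.powerset, (if D ⊆ F then (-1:ℝ)^(E \ F).card else 0)
      = if D = E then 1 else 0 := by
  have base : ∀ A : Finset V, ∑ G ∈ A.powerset, (-1:ℝ)^G.card
      = if A = ∅ then 1 else 0 := by
    intro A
    have h := Finset.sum_powerset_neg_one_pow_card (x := A)
    have h2 : ((∑ m ∈ A.powerset, (-1:ℤ)^m.card : ℤ) : ℝ)
        = ((if A = ∅ then 1 else 0 : ℤ) : ℝ) := by exact_mod_cast h
    push_cast at h2
    split_ifs at h2 ⊢ <;> simpa using h2
  by_cases hDE : D ⊆ E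
  · rw [← Finset.sum_filter]
    rw [Finset.sum_nbij' (i := fun F => F \ D) (j := fun G => G ∪ D)
      (t := (E \ D).powerset) (g := fun G => (-1:ℝ)^((E \ D) \ G).card)]
    · have key : ∑ G ∈ (E \ D).powerset, (-1:ℝ)^((E \ D) \ G).card
          = if E \ D = ∅ then 1 else 0 := by
        have : ∀ G ∈ (E \ D).powerset, (-1:ℝ)^((E \ D) \ G).card
            = (-1:ℝ)^(E \ D).card * (-1:ℝ)^G.card := by
          intro G hG
          rw [Finset.mem_powerset] at hG
          rw [Finset.card_sdiff_of_subset hG]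
          have hle := Finset.card_le_card hG
          have key : (-1:ℝ)^(E \ D).card * (-1:ℝ)^G.card
              = (-1:ℝ)^((E \ D).card - G.card) := by
            rw [← pow_add,
              show (E \ D).card + G.card = ((E \ D).card - G.card) + 2 * G.card by omega,
              pow_add, pow_mul]
            norm_num
          rw [← key]
        rw [Finset.sum_congr rfl this, ← Finset.mul_sum, base]
        by_cases hA : E \ D = ∅ <;> simp [hA]
      rw [key]
      have : E \ D = ∅ ↔ D = E := by
        rw [Finset.sdiff_eq_empty_iff_subset]
        exact ⟨fun h => Finset.Subset.antisymm hDE h, fun h => h ▸ Finset.Subset.refl E⟩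
      simp only [this]
    · intro F hF
      simp only [Finset.mem_filter, Finset.mem_powerset] at hF
      exact Finset.mem_powerset.2 (Finset.sdiff_subset_sdiff hF.1 (Finset.Subset.refl D))
    · intro G hG
      rw [Finset.mem_powerset] at hG
      simp only [Finset.mem_filter, Finset.mem_powerset]
      constructor
      · exact Finset.union_subset (hG.trans (Finset.sdiff_subset)) hDE
      · exact Finset.subset_union_right
    · intro F hF
      simp only [Finset.mem_filter, Finset.mem_powerset] at hF
      exact Finset.sdiff_union_of_subset hF.2
    · intro G hG
      rw [Finset.mem_powerset] at hG
      ext γ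
      simp only [Finset.mem_sdiff, Finset.mem_union]
      constructor
      · rintro ⟨h1 | h1, h2⟩
        · exact h1
        · exact absurd h1 h2
      · intro h
        exact ⟨Or.inl h, fun hD => (Finset.mem_sdiff.1 (hG h)).2 hD⟩
    · intro F hF
      simp only [Finset.mem_filter, Finset.mem_powerset] at hF
      have hFD : E \ F = (E \ D) \ (F \ D) := by
        ext γ
        simp only [Finset.mem_sdiff]
        constructor
        · intro ⟨h1, h2⟩
          exact ⟨⟨h1, fun hD => h2 (hF.2 hD)⟩, fun hFD => h2 hFD.1⟩
        · intro ⟨⟨h1, h2⟩, h3⟩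
          exact ⟨h1, fun hF' => h3 ⟨hF', h2⟩⟩
      rw [hFD]
  · rw [if_neg (show ¬ D = E from fun h => hDE (by rw [h]))]
    refine Finset.sum_eq_zero fun F hF => ?_
    rw [Finset.mem_powerset] at hF
    exact if_neg (fun h => hDE (h.trans hF))

theorem theta_of_phier {V : Type} [Fintype V] [DecidableEq V]
    {I : V → Type} [∀ γ, Fintype (I γ)] [∀ γ, DecidableEq (I γ)]
    (b : ∀ γ, I γ) (𝒟 : Finset (Finset V)) (h𝒟 : IsGenClass 𝒟)
    (θ : TParam I b 𝒟 → ℝ) (E : Finset V) (hE : E ≠ ∅)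
    (i : ∀ γ, I γ) (hsupp : cellSupport b i = E) :
    (∑ F ∈ E.powerset, (-1 : ℝ) ^ (E \ F).card * Real.log (phier b 𝒟 θ (cellOn b F i)))
      = if h : E ∈ 𝒟 then θ ⟨(E, i), ⟨h, hsupp⟩⟩ else 0 := by
  classical
  have hZ : 0 < Zfun b 𝒟 θ :=
    Finset.sum_pos (fun j _ => Real.exp_pos _) ⟨b, Finset.mem_univ b⟩
  have hlog : ∀ j, Real.log (phier b 𝒟 θ j) = energy b 𝒟 θ j - kfun b 𝒟 θ := by
    intro j
    rw [phier, Real.log_div (Real.exp_ne_zero _) (ne_of_gt hZ), Real.log_exp, kfun]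
  simp only [hlog, mul_sub, Finset.sum_sub_distrib]
  have hbase : ∀ γ, γ ∉ E → i γ = b γ := by
    intro γ hγ
    by_contra h
    exact hγ (hsupp ▸ (Finset.mem_filter.2 ⟨Finset.mem_univ γ, h⟩))
  have hEi : cellOn b E i = i := by
    funext γ
    by_cases hγ : γ ∈ E
    · simp [cellOn, hγ]
    · simp [cellOn, hγ, hbase γ hγ]
  have hen : ∀ F ∈ E.powerset, energy b 𝒟 θ (cellOn b F i)
      = ∑ t : TParam I b 𝒟, if t.1.1 ⊆ F ∧ t.1.2 = cellOn b t.1.1 i then θ t else 0 := by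
    intro F hF
    rw [Finset.mem_powerset] at hF
    refine Finset.sum_congr rfl fun t _ => ?_
    obtain ⟨⟨D, jD⟩, hD, hsup⟩ := t
    have hsup' : cellSupport b jD = D := hsup
    refine if_congr ?_ rfl rfl
    show jD = cellOn b D (cellOn b F i) ↔ D ⊆ F ∧ jD = cellOn b D i
    constructor
    · intro h
      have hDF : D ⊆ F := by
        intro γ hγ
        have h1 : jD γ ≠ b γ := by
          rw [← hsup'] at hγ
          exact (Finset.mem_filter.1 hγ).2
        by_contra hγF
        have hh := congrFun h γ
        simp [cellOn, hγ, hγF] at hh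
        exact h1 hh
      refine ⟨hDF, ?_⟩
      funext γ
      have hh := congrFun h γ
      by_cases hγD : γ ∈ D
      · simp only [cellOn, hγD, if_true, hDF hγD] at hh ⊢
        exact hh
      · simp only [cellOn, hγD, if_false] at hh ⊢
        exact hh
    · rintro ⟨hDF, rfl⟩
      funext γ
      by_cases hγD : γ ∈ D
      · simp [cellOn, hγD, hDF hγD]
      · simp [cellOn, hγD]
  have h2 : ∑ F ∈ E.powerset, (-1:ℝ)^(E \ F).card * kfun b 𝒟 θ = 0 := by
    rw [← Finset.sum_mul]
    have ha := alt_sum_real E (∅ : Finset V)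
    simp only [Finset.empty_subset, if_true] at ha
    rw [ha, if_neg (Ne.symm hE), zero_mul]
  rw [h2, sub_zero]
  have h1 : ∑ F ∈ E.powerset, (-1:ℝ)^(E \ F).card * energy b 𝒟 θ (cellOn b F i)
      = ∑ t : TParam I b 𝒟, if t.1.1 = E ∧ t.1.2 = cellOn b t.1.1 i then θ t else 0 := by
    calc ∑ F ∈ E.powerset, (-1:ℝ)^(E \ F).card * energy b 𝒟 θ (cellOn b F i)
        = ∑ F ∈ E.powerset, ∑ t : TParam I b 𝒟,
            (if t.1.1 ⊆ F ∧ t.1.2 = cellOn b t.1.1 i then (-1:ℝ)^(E \ F).card * θ t else 0) := by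
          refine Finset.sum_congr rfl fun F hF => ?_
          rw [hen F hF, Finset.mul_sum]
          exact Finset.sum_congr rfl fun t _ => by rw [mul_ite, mul_zero]
      _ = ∑ t : TParam I b 𝒟, ∑ F ∈ E.powerset,
            (if t.1.1 ⊆ F ∧ t.1.2 = cellOn b t.1.1 i then (-1:ℝ)^(E \ F).card * θ t else 0) :=
          Finset.sum_comm
      _ = ∑ t : TParam I b 𝒟, if t.1.2 = cellOn b t.1.1 i then
            (∑ F ∈ E.powerset, if t.1.1 ⊆ F then (-1:ℝ)^(E \ F).card else 0) * θ t else 0 := by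
          refine Finset.sum_congr rfl fun t _ => ?_
          by_cases hB : t.1.2 = cellOn b t.1.1 i
          · simp only [hB, if_true, and_true, Finset.sum_mul]
            refine Finset.sum_congr rfl fun F _ => ?_
            by_cases hA : t.1.1 ⊆ F <;> simp [hA]
          · simp only [hB, if_false, and_false]
            exact Finset.sum_eq_zero fun F _ => rfl
      _ = ∑ t : TParam I b 𝒟, if t.1.1 = E ∧ t.1.2 = cellOn b t.1.1 i then θ t else 0 := by
          refine Finset.sum_congr rfl fun t _ => ?_
          rw [alt_sum_real E t.1.1]
          by_cases hB : t.1.2 = cellOn b t.1.1 i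
          · by_cases hA : t.1.1 = E <;> simp [hA, hB]
          · simp [hB]
  rw [h1]
  by_cases h : E ∈ 𝒟
  · rw [dif_pos h]
    refine (Finset.sum_eq_single (⟨(E, i), ⟨h, hsupp⟩⟩ : TParam I b 𝒟) ?_ ?_).trans ?_
    · intro t _ hne
      refine if_neg fun hc => hne ?_
      obtain ⟨hA, hB⟩ := hc
      exact Subtype.ext (Prod.ext hA (by rw [hB, hA, hEi]))
    · exact fun hmem => absurd (Finset.mem_univ _) hmem
    · exact if_pos ⟨rfl, hEi.symm⟩
  · rw [dif_neg h]
    refine Finset.sum_eq_zero fun t _ => ?_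
    refine if_neg fun ⟨hA, _⟩ => h (hA ▸ t.2.1)
end

section
/- Let s : T → ℝ and α ∈ ℝ be such that I(s,α) := ∫_{ℝ^T} exp(Σ_{(D,i_D)∈T} s(D,i_D)θ(D,i_D) − α k(θ)) dθ is finite, and let r be a positive integer. (a) For every (D, i_D) ∈ T, ∫_{ℝ^T} (∏_{F⊆D} p_θ(i_F, i*_{F^c})^{(−1)^{|D∖F|}})^r · exp(Σ s(C,j_C)θ(C,j_C) − α k(θ)) dθ = I(s̃_D, α), where s̃_D agrees with s except that s̃_D(D, i_D) = s(D, i_D) + r. (b) For every nonempty E ⊆ V and i_E ∈ I_E*, ∫_{ℝ^T} p_θ(i_E, i*_{E^c})^r · exp(Σ s(C,j_C)θ(C,j_C) − α k(θ)) dθ = I(s̃_{E,r}, α + r), where s̃_{E,r}(F, j_F) = s(F, j_F) + r if F ∈ 𝒟, F ⊆ E and j_F = (i_E)_F, and s̃_{E,r}(F, j_F) = s(F, j_F) otherwise. In particular the r-th prior moments of the generalized odds ratios and of the cell probabilities are ratios of normalizing constants I. -/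
open Finset MeasureTheory

/-- The normalizing constant `I(s, α)` of the Diaconis–Ylvisaker conjugate prior. -/
noncomputable def normConst {V : Type} [Fintype V] [DecidableEq V]
    {I : V → Type} [∀ γ, Fintype (I γ)] [∀ γ, DecidableEq (I γ)]
    (b : ∀ γ, I γ) (𝒟 : Finset (Finset V)) (s : TParam I b 𝒟 → ℝ) (α : ℝ) : ℝ :=
  ∫ θ : TParam I b 𝒟 → ℝ,
    Real.exp ((∑ t : TParam I b 𝒟, s t * θ t) - α * kfun b 𝒟 θ)


section Aux

variable {V : Type} [Fintype V] [DecidableEq V] {I : V → Type}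
  [∀ γ, Fintype (I γ)] [∀ γ, DecidableEq (I γ)] (b : ∀ γ, I γ)
  (𝒟 : Finset (Finset V))

lemma mem_cellSupport {j : ∀ γ, I γ} {γ : V} :
    γ ∈ cellSupport b j ↔ j γ ≠ b γ := by
  simp [cellSupport]

lemma Zfun_pos (θ : TParam I b 𝒟 → ℝ) : 0 < Zfun b 𝒟 θ :=
  Finset.sum_pos (fun j _ => Real.exp_pos _) ⟨b, Finset.mem_univ b⟩

lemma phier_eq (θ : TParam I b 𝒟 → ℝ) (j : ∀ γ, I γ) :
    phier b 𝒟 θ j = Real.exp (energy b 𝒟 θ j - kfun b 𝒟 θ) := by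
  rw [phier, kfun, Real.exp_sub, Real.exp_log (Zfun_pos b 𝒟 θ)]

lemma exp_zpow (x : ℝ) (n : ℤ) : Real.exp x ^ n = Real.exp (n * x) := by
  rw [← Real.rpow_intCast, Real.rpow_def_of_pos (Real.exp_pos x), Real.log_exp, mul_comm]

lemma mob (D G : Finset V) :
    (∑ F ∈ D.powerset, if G ⊆ F then ((-1 : ℝ) ^ (D \ F).card) else 0)
      = if G = D then 1 else 0 := by
  by_cases hG : G ⊆ D
  · have h1 : (∑ F ∈ D.powerset, if G ⊆ F then ((-1 : ℝ) ^ (D \ F).card) else 0)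
        = ∑ H ∈ D.powerset, if H ⊆ D \ G then ((-1 : ℝ) ^ H.card) else 0 := by
      refine Finset.sum_nbij' (fun F => D \ F) (fun H => D \ H) ?_ ?_ ?_ ?_ ?_
      · intro F hF; exact Finset.mem_powerset.2 (Finset.sdiff_subset)
      · intro H hH; exact Finset.mem_powerset.2 (Finset.sdiff_subset)
      · intro F hF; exact Finset.sdiff_sdiff_eq_self (Finset.mem_powerset.1 hF)
      · intro H hH; exact Finset.sdiff_sdiff_eq_self (Finset.mem_powerset.1 hH)
      · intro F hF
        have hFD : F ⊆ D := Finset.mem_powerset.1 hF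
        have hcond : G ⊆ F ↔ D \ F ⊆ D \ G := by
          constructor
          · intro h; exact Finset.sdiff_subset_sdiff (le_refl D) h
          · intro h γ hγ
            by_contra hγF
            have : γ ∈ D \ F := Finset.mem_sdiff.2 ⟨hG hγ, hγF⟩
            have := h this
            exact (Finset.mem_sdiff.1 this).2 hγ
        rw [if_congr hcond rfl rfl]
    rw [h1]
    have hps : D.powerset.filter (fun H => H ⊆ D \ G) = (D \ G).powerset := by
      ext H
      simp only [Finset.mem_filter, Finset.mem_powerset]
      exact ⟨fun h => h.2, fun h => ⟨h.trans Finset.sdiff_subset, h⟩⟩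
    have h2 : (∑ H ∈ D.powerset, if H ⊆ D \ G then ((-1 : ℝ) ^ H.card) else 0)
        = ∑ H ∈ (D \ G).powerset, ((-1 : ℝ) ^ H.card) := by
      rw [← Finset.sum_filter, hps]
    have h3 : (∑ H ∈ (D \ G).powerset, ((-1 : ℝ) ^ H.card))
        = if D \ G = ∅ then 1 else 0 := by
      have := Finset.sum_powerset_neg_one_pow_card (x := D \ G)
      have hcast : ((∑ m ∈ (D \ G).powerset, (-1 : ℤ) ^ m.card : ℤ) : ℝ)
          = ∑ H ∈ (D \ G).powerset, ((-1 : ℝ) ^ H.card) := by push_cast; rfl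
      rw [← hcast, this]
      split <;> norm_num
    rw [h2, h3]
    have : D \ G = ∅ ↔ G = D := by
      rw [Finset.sdiff_eq_empty_iff_subset]
      exact ⟨fun h => subset_antisymm hG h, fun h => h ▸ le_refl _⟩
    simp [this]
  · have hz : ∀ F ∈ D.powerset, (if G ⊆ F then ((-1 : ℝ) ^ (D \ F).card) else 0) = 0 := by
      intro F hF
      rw [if_neg]
      intro h
      exact hG (h.trans (Finset.mem_powerset.1 hF))
    rw [Finset.sum_congr rfl hz, Finset.sum_const, smul_zero, if_neg]
    intro h; exact hG (h ▸ le_refl _)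

lemma cell_cond (E : Finset V) (i : ∀ γ, I γ) (hi : ∀ γ ∈ E, i γ ≠ b γ)
    (t : TParam I b 𝒟) :
    t.1.2 = cellOn b t.1.1 (cellOn b E i)
      ↔ (t.1.1 ⊆ E ∧ ∀ γ ∈ t.1.1, t.1.2 γ = i γ) := by
  have hsup : cellSupport b t.1.2 = t.1.1 := t.2.2
  constructor
  · intro h
    have key : ∀ γ ∈ t.1.1, γ ∈ E ∧ t.1.2 γ = i γ := by
      intro γ hγ
      have hne : t.1.2 γ ≠ b γ := (mem_cellSupport b).1 (hsup ▸ hγ)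
      have hval : t.1.2 γ = if γ ∈ E then i γ else b γ := by
        rw [h]; simp [cellOn, hγ]
      by_cases hE : γ ∈ E
      · exact ⟨hE, by simpa [hE] using hval⟩
      · exact absurd (by simpa [hE] using hval) hne
    exact ⟨fun γ hγ => (key γ hγ).1, fun γ hγ => (key γ hγ).2⟩
  · rintro ⟨hsub, hag⟩
    funext γ
    by_cases hγ : γ ∈ t.1.1
    · simp [cellOn, hγ, hsub hγ, hag γ hγ]
    · have : t.1.2 γ = b γ := by
        by_contra hne
        exact hγ (hsup ▸ (mem_cellSupport b).2 hne)
      simp [cellOn, hγ, this]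

lemma energy_cellOn (θ : TParam I b 𝒟 → ℝ) (E : Finset V) (i : ∀ γ, I γ)
    (hi : ∀ γ ∈ E, i γ ≠ b γ) :
    energy b 𝒟 θ (cellOn b E i)
      = ∑ t : TParam I b 𝒟,
          if t.1.1 ⊆ E ∧ (∀ γ ∈ t.1.1, t.1.2 γ = i γ) then θ t else 0 := by
  unfold energy
  exact Finset.sum_congr rfl fun t _ => if_congr (cell_cond b 𝒟 E i hi t) rfl rfl

lemma alt_energy (θ : TParam I b 𝒟 → ℝ) (t₀ : TParam I b 𝒟) :
    (∑ F ∈ t₀.1.1.powerset,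
        ((-1 : ℝ) ^ (t₀.1.1 \ F).card) * energy b 𝒟 θ (cellOn b F t₀.1.2))
      = θ t₀ := by
  set D := t₀.1.1 with hD
  set i := t₀.1.2 with hi
  have hsup : cellSupport b i = D := t₀.2.2
  have hiD : ∀ γ ∈ D, i γ ≠ b γ := fun γ hγ => (mem_cellSupport b).1 (hsup ▸ hγ)
  have step1 : ∀ F ∈ D.powerset,
      ((-1 : ℝ) ^ (D \ F).card) * energy b 𝒟 θ (cellOn b F i)
      = ∑ t : TParam I b 𝒟,
          if t.1.1 ⊆ F ∧ (∀ γ ∈ t.1.1, t.1.2 γ = i γ) then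
            ((-1 : ℝ) ^ (D \ F).card) * θ t else 0 := by
    intro F hF
    rw [energy_cellOn b 𝒟 θ F i (fun γ hγ => hiD γ (Finset.mem_powerset.1 hF hγ)),
      Finset.mul_sum]
    exact Finset.sum_congr rfl fun t _ => by rw [mul_ite, mul_zero]
  rw [Finset.sum_congr rfl step1, Finset.sum_comm]
  have key : ∀ t : TParam I b 𝒟,
      (∑ F ∈ D.powerset,
        if t.1.1 ⊆ F ∧ (∀ γ ∈ t.1.1, t.1.2 γ = i γ) then
          ((-1 : ℝ) ^ (D \ F).card) * θ t else 0)
      = if (t.1.1 = D ∧ ∀ γ ∈ t.1.1, t.1.2 γ = i γ) then θ t else 0 := by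
    intro t
    by_cases hQ : ∀ γ ∈ t.1.1, t.1.2 γ = i γ
    · rw [Finset.sum_congr rfl (fun F _ => if_congr (and_iff_left hQ) rfl rfl),
        if_congr (and_iff_left hQ) rfl rfl]
      have : (∑ F ∈ D.powerset,
          if t.1.1 ⊆ F then ((-1 : ℝ) ^ (D \ F).card) * θ t else 0)
          = (∑ F ∈ D.powerset, if t.1.1 ⊆ F then ((-1 : ℝ) ^ (D \ F).card) else 0)
            * θ t := by
        rw [Finset.sum_mul]
        exact Finset.sum_congr rfl fun F _ => by rw [ite_mul, zero_mul]
      rw [this, mob, ite_mul, one_mul, zero_mul]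
    · simp [hQ]
  rw [Finset.sum_congr rfl (fun t _ => key t)]
  rw [Finset.sum_eq_single_of_mem t₀ (Finset.mem_univ t₀)]
  · rw [if_pos ⟨rfl, fun γ _ => rfl⟩]
  · intro t _ hne
    rw [if_neg]
    rintro ⟨h1, h2⟩
    apply hne
    apply Subtype.ext
    apply Prod.ext h1
    funext γ
    by_cases hγ : γ ∈ D
    · exact h2 γ (h1 ▸ hγ)
    · have ht : t.1.2 γ = b γ := by
        by_contra hc
        exact hγ (h1 ▸ t.2.2 ▸ (mem_cellSupport b).2 hc)
      have hi0 : i γ = b γ := by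
        by_contra hc
        exact hγ (hsup ▸ (mem_cellSupport b).2 hc)
      rw [ht]; exact hi0.symm

lemma alt_const (D : Finset V) (hD : D ≠ ∅) :
    (∑ F ∈ D.powerset, ((-1 : ℝ) ^ (D \ F).card)) = 0 := by
  have := mob (V := V) D ∅
  simp only [Finset.empty_subset, if_true] at this
  rw [this, if_neg (fun h => hD h.symm)]

end Aux

/-- Moments of the generalized odds ratios and of the cell probabilities under the
Diaconis–Ylvisaker conjugate prior are ratios of normalizing constants:
(a) the `r`-th moment integral of `∏_{F⊆D} p_θ(i_F,i*)^{(−1)^{|D∖F|}}` equals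
`I(s̃_D, α)`; (b) the `r`-th moment integral of `p_θ(i_E, i*)` equals `I(s̃_{E,r}, α+r)`. -/
theorem prior_moments {V : Type} [Fintype V] [DecidableEq V]
    {I : V → Type} [∀ γ, Fintype (I γ)] [∀ γ, DecidableEq (I γ)]
    (b : ∀ γ, I γ) (𝒟 : Finset (Finset V)) (h𝒟 : IsGenClass 𝒟)
    (s : TParam I b 𝒟 → ℝ) (α : ℝ)
    (hint : MeasureTheory.Integrable
      (fun θ : TParam I b 𝒟 → ℝ =>
        Real.exp ((∑ t : TParam I b 𝒟, s t * θ t) - α * kfun b 𝒟 θ))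
      MeasureTheory.volume)
    (r : ℕ) (hr : 0 < r) :
    (∀ t₀ : TParam I b 𝒟,
      (∫ θ : TParam I b 𝒟 → ℝ,
          ((∏ F ∈ t₀.1.1.powerset,
              phier b 𝒟 θ (cellOn b F t₀.1.2) ^ ((-1 : ℤ) ^ (t₀.1.1 \ F).card)) ^ r) *
            Real.exp ((∑ t : TParam I b 𝒟, s t * θ t) - α * kfun b 𝒟 θ))
        = normConst b 𝒟 (Function.update s t₀ (s t₀ + (r : ℝ))) α) ∧
    (∀ (E : Finset V), E ≠ ∅ → ∀ (i : ∀ γ, I γ), (∀ γ ∈ E, i γ ≠ b γ) →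
      (∫ θ : TParam I b 𝒟 → ℝ,
          (phier b 𝒟 θ (cellOn b E i)) ^ r *
            Real.exp ((∑ t : TParam I b 𝒟, s t * θ t) - α * kfun b 𝒟 θ))
        = normConst b 𝒟
            (fun t => if t.1.1 ⊆ E ∧ (∀ γ ∈ t.1.1, t.1.2 γ = i γ) then s t + (r : ℝ) else s t)
            (α + (r : ℝ))) := by
  refine ⟨fun t₀ => ?_, fun E hE i hi => ?_⟩
  · rw [normConst]
    refine integral_congr_ae (Filter.Eventually.of_forall fun θ => ?_)
    beta_reduce
    have hD : t₀.1.1 ≠ ∅ := h𝒟.2.1 _ t₀.2.1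
    have hprod : (∏ F ∈ t₀.1.1.powerset,
        phier b 𝒟 θ (cellOn b F t₀.1.2) ^ ((-1 : ℤ) ^ (t₀.1.1 \ F).card))
        = Real.exp (θ t₀) := by
      have hterm : ∀ F ∈ t₀.1.1.powerset,
          phier b 𝒟 θ (cellOn b F t₀.1.2) ^ ((-1 : ℤ) ^ (t₀.1.1 \ F).card)
          = Real.exp (((-1 : ℝ) ^ (t₀.1.1 \ F).card) *
              (energy b 𝒟 θ (cellOn b F t₀.1.2) - kfun b 𝒟 θ)) := by
        intro F _
        rw [phier_eq, exp_zpow]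
        norm_num
      rw [Finset.prod_congr rfl hterm, ← Real.exp_sum]
      congr 1
      have hsplit : (∑ F ∈ t₀.1.1.powerset, ((-1 : ℝ) ^ (t₀.1.1 \ F).card) *
            (energy b 𝒟 θ (cellOn b F t₀.1.2) - kfun b 𝒟 θ))
          = (∑ F ∈ t₀.1.1.powerset,
              ((-1 : ℝ) ^ (t₀.1.1 \ F).card) * energy b 𝒟 θ (cellOn b F t₀.1.2))
            - (∑ F ∈ t₀.1.1.powerset, ((-1 : ℝ) ^ (t₀.1.1 \ F).card)) * kfun b 𝒟 θ := by
        rw [Finset.sum_mul, ← Finset.sum_sub_distrib]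
        exact Finset.sum_congr rfl fun F _ => mul_sub _ _ _
      rw [hsplit, alt_const _ hD, alt_energy b 𝒟 θ t₀, zero_mul, sub_zero]
    rw [hprod, ← Real.exp_nat_mul, ← Real.exp_add]
    have hupd : (∑ t : TParam I b 𝒟, Function.update s t₀ (s t₀ + (r : ℝ)) t * θ t)
        = (∑ t : TParam I b 𝒟, s t * θ t) + (r : ℝ) * θ t₀ := by
      have h1 : ∀ t : TParam I b 𝒟, Function.update s t₀ (s t₀ + (r : ℝ)) t * θ t
          = s t * θ t + (if t = t₀ then (r : ℝ) * θ t else 0) := by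
        intro t
        rcases eq_or_ne t t₀ with h | h
        · subst h; simp [Function.update_self]; ring
        · simp [Function.update_of_ne h, h]
      rw [Finset.sum_congr rfl (fun t _ => h1 t), Finset.sum_add_distrib,
        Finset.sum_ite_eq' Finset.univ t₀ (fun t => (r : ℝ) * θ t),
        if_pos (Finset.mem_univ t₀)]
    rw [hupd]
    congr 1
    ring
  · rw [normConst]
    refine integral_congr_ae (Filter.Eventually.of_forall fun θ => ?_)
    beta_reduce
    have he : energy b 𝒟 θ (cellOn b E i)
        = ∑ t : TParam I b 𝒟,
            if t.1.1 ⊆ E ∧ (∀ γ ∈ t.1.1, t.1.2 γ = i γ) then θ t else 0 :=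
      energy_cellOn b 𝒟 θ E i hi
    rw [phier_eq, he, ← Real.exp_nat_mul, ← Real.exp_add]
    have hsum : (∑ t : TParam I b 𝒟,
          (if t.1.1 ⊆ E ∧ (∀ γ ∈ t.1.1, t.1.2 γ = i γ) then s t + (r : ℝ) else s t)
            * θ t)
        = (∑ t : TParam I b 𝒟, s t * θ t)
          + (r : ℝ) * ∑ t : TParam I b 𝒟,
              if t.1.1 ⊆ E ∧ (∀ γ ∈ t.1.1, t.1.2 γ = i γ) then θ t else 0 := by
      have h1 : ∀ t : TParam I b 𝒟,
          (if t.1.1 ⊆ E ∧ (∀ γ ∈ t.1.1, t.1.2 γ = i γ) then s t + (r : ℝ) else s t)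
            * θ t
          = s t * θ t + (r : ℝ) *
              (if t.1.1 ⊆ E ∧ (∀ γ ∈ t.1.1, t.1.2 γ = i γ) then θ t else 0) := by
        intro t
        by_cases hc : t.1.1 ⊆ E ∧ (∀ γ ∈ t.1.1, t.1.2 γ = i γ)
        · simp only [if_pos hc]; ring
        · simp only [if_neg hc, mul_zero, add_zero]
      rw [Finset.sum_congr rfl (fun t _ => h1 t), Finset.sum_add_distrib,
        ← Finset.mul_sum]
    rw [hsum]
    congr 1
    ring
end

section
/- Let G be a simple graph on a finite vertex set V and let H ⊆ V be nonempty. If the induced subgraph G[H] is connected and chordal, then Σ_{C} (−1)^{|C|−1} = 1, where the sum runs over all nonempty complete subsets C of H (i.e., nonempty cliques of G contained in H). -/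
open Finset

/-- A simple graph is chordal (decomposable) if every cycle of length at least 4
has a chord: two vertices of the cycle that are adjacent in the graph but not
consecutive along the cycle. -/
def IsChordal {α : Type} (G : SimpleGraph α) : Prop :=
  ∀ (v : α) (w : G.Walk v v), w.IsCycle → 4 ≤ w.length →
    ∃ x y, x ∈ w.support ∧ y ∈ w.support ∧ G.Adj x y ∧ s(x, y) ∉ w.edges

/-- A finset is complete (a clique) if every two distinct vertices in it are adjacent. -/
def IsCompleteSet {α : Type} (G : SimpleGraph α) (C : Finset α) : Prop :=
  ∀ u ∈ C, ∀ v ∈ C, u ≠ v → G.Adj u v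

instance {α : Type} [DecidableEq α] (G : SimpleGraph α) [DecidableRel G.Adj]
    (C : Finset α) : Decidable (IsCompleteSet G C) := by
  unfold IsCompleteSet; infer_instance

/-!
Induction on the number of vertices, for a connected chordal graph on its whole vertex set. If the
graph is complete, the sum runs over all nonempty subsets and equals `1`. Otherwise pick
non-adjacent `a`, `b`, let `B` be the component of `b` in the graph minus the closed neighbourhood
of `a`, and `S ⊆ N(a)` the set of neighbours of `B`. No edge leaves `B` except into `S`, so every
clique lies in `B ∪ S` or in `V \ B`, which meet in `S`, and the sum `f` splits as
`f(B ∪ S) + f(V \ B) - f(S)`. Both pieces induce smaller connected chordal graphs, and `S` is a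
clique: two non-adjacent `x, y ∈ S`, together with `a` and a shortest `x`–`y` path through `B`,
would form a chordless cycle of length at least `4`. Hence the sum is `1 + 1 - 1`.
-/

lemma Finset.sum_filter_ne_empty_neg_one_pow_card_sub_one {α : Type*} [DecidableEq α]
    {K : Finset α} (hK : K.Nonempty) :
    ∑ C ∈ K.powerset.filter (· ≠ ∅), (-1 : ℤ) ^ (C.card - 1) = 1 := by
  have hsplit := Finset.sum_filter_add_sum_filter_not K.powerset (· ≠ ∅)
    (fun C => (-1 : ℤ) ^ C.card)
  have hempty : K.powerset.filter (fun C => ¬C ≠ ∅) = {∅} := by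
    ext C; simp only [Finset.mem_filter, Finset.mem_powerset, not_not, Finset.mem_singleton]
    exact ⟨And.right, fun h => ⟨h ▸ Finset.empty_subset K, h⟩⟩
  rw [Finset.sum_powerset_neg_one_pow_card_of_nonempty hK, hempty, Finset.sum_singleton,
    Finset.card_empty, pow_zero] at hsplit
  calc ∑ C ∈ K.powerset.filter (· ≠ ∅), (-1 : ℤ) ^ (C.card - 1)
      = -∑ C ∈ K.powerset.filter (· ≠ ∅), (-1 : ℤ) ^ C.card := by
        rw [← Finset.sum_neg_distrib]
        refine Finset.sum_congr rfl fun C hC => ?_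
        obtain ⟨n, hn⟩ := Nat.exists_eq_succ_of_ne_zero
          (Finset.card_ne_zero.2 (Finset.nonempty_iff_ne_empty.2 (Finset.mem_filter.1 hC).2))
        simp [hn, pow_succ]
    _ = 1 := by linarith

lemma IsCompleteSet.subset {α : Type} {Γ : SimpleGraph α} {C D : Finset α}
    (hD : IsCompleteSet Γ D) (hCD : C ⊆ D) : IsCompleteSet Γ C :=
  fun u hu v hv huv => hD u (hCD hu) v (hCD hv) huv

namespace SimpleGraph

section

variable {V : Type*} {G : SimpleGraph V}

namespace Walk

lemma exists_shorter_of_adj_start {x y v : V} (p : G.Walk x y) (hv : v ∈ p.support)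
    (h : G.Adj x v) (he : s(x, v) ∉ p.edges) :
    ∃ q : G.Walk x y, q.support ⊆ p.support ∧ q.length < p.length := by
  classical
  cases p with
  | nil => exact absurd ((mem_support_nil_iff).1 hv) h.ne.symm
  | @cons _ c _ hxc p' =>
    have hv' : v ∈ p'.support := by
      rcases List.mem_cons.1 (support_cons _ _ ▸ hv) with rfl | hv'
      · exact absurd rfl h.ne
      · exact hv'
    have hcv : c ≠ v := by rintro rfl; simp at he
    refine ⟨cons h (p'.dropUntil v hv'), fun z hz => ?_, ?_⟩
    · rw [support_cons, List.mem_cons] at hz ⊢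
      exact hz.imp_right fun hz => p'.support_dropUntil_subset_support hv' hz
    · have hsplit := congrArg length (p'.take_spec hv')
      have h0 : (p'.takeUntil v hv').length ≠ 0 := fun h0 => hcv (eq_of_length_eq_zero h0)
      rw [length_append] at hsplit
      simp only [length_cons]
      omega

lemma exists_shorter_of_adj_of_notMem_edges {x y u v : V} (p : G.Walk x y)
    (hu : u ∈ p.support) (hv : v ∈ p.support) (h : G.Adj u v) (he : s(u, v) ∉ p.edges) :
    ∃ q : G.Walk x y, q.support ⊆ p.support ∧ q.length < p.length := by
  induction p with
  | nil =>
    rw [mem_support_nil_iff] at hu hv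
    exact absurd (hu.trans hv.symm) h.ne
  | @cons x c y hxc p' ih =>
    rw [support_cons, List.mem_cons] at hu hv
    rcases hu with rfl | hu
    · exact (cons hxc p').exists_shorter_of_adj_start
        (support_cons _ _ ▸ List.mem_cons.2 hv) h he
    rcases hv with rfl | hv
    · exact (cons hxc p').exists_shorter_of_adj_start
        (support_cons _ _ ▸ List.mem_cons_of_mem _ hu)
        h.symm (Sym2.eq_swap ▸ he)
    obtain ⟨q, hq, hlen⟩ := ih hu hv fun he' => he (by simp [he'])
    refine ⟨cons hxc q, fun z hz => ?_, by simpa using hlen⟩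
    rw [support_cons, List.mem_cons] at hz ⊢
    exact hz.imp_right fun hz => hq hz

lemma exists_isPath_isChordless_support_subset {x y : V} (p : G.Walk x y) :
    ∃ q : G.Walk x y, q.support ⊆ p.support ∧ q.IsPath ∧ q.IsChordless := by
  classical
  induction hn : p.length using Nat.strong_induction_on generalizing p with
  | _ n ih =>
  by_cases hchordless : p.IsChordless
  · by_cases hbypass : p.bypass.length < p.length
    · obtain ⟨r, hr, hrest⟩ := ih _ (hn ▸ hbypass) p.bypass rfl
      exact ⟨r, fun z hz => p.support_bypass_subset_support (hr hz), hrest⟩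
    · refine ⟨p, List.Subset.refl _, ?_, hchordless⟩
      rw [← p.bypass_eq_self_of_length_le_length_bypass (not_lt.1 hbypass)]
      exact p.bypass_isPath
  · rw [isChordless_iff_forall_mem_edges] at hchordless
    push Not at hchordless
    obtain ⟨u, v, hu, hv, h, he⟩ := hchordless
    obtain ⟨q, hq, hlen⟩ := p.exists_shorter_of_adj_of_notMem_edges hu hv h he
    obtain ⟨r, hr, hrest⟩ := ih _ (hn ▸ hlen) q rfl
    exact ⟨r, fun z hz => hq (hr hz), hrest⟩

end Walk

lemma connected_induce_of_forall_walk {s : Set V} (u : V) (hu : u ∈ s)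
    (h : ∀ v ∈ s, ∃ p : G.Walk u v, ∀ z ∈ p.support, z ∈ s) :
    (G.induce s).Connected :=
  G.induce_connected_of_patches u hu fun hv =>
    let ⟨p, hp⟩ := h _ hv
    ⟨{z | z ∈ p.support}, hp, p.start_mem_support, p.end_mem_support,
      p.connected_induce_support.preconnected _ _⟩

end

variable {α : Type} {Γ : SimpleGraph α}

lemma _root_.IsChordal.of_embedding {β : Type} {Γ' : SimpleGraph β} (f : Γ' ↪g Γ)
    (h : IsChordal Γ) : IsChordal Γ' := by
  intro v w hw hlen
  obtain ⟨x, y, hx, hy, hxy, he⟩ := h _ (w.map f.toHom)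
    ((Walk.isCycle_map_iff_of_injective f.injective).2 hw) (by rwa [Walk.length_map])
  rw [Walk.support_map, List.mem_map] at hx hy
  obtain ⟨x', hx', rfl⟩ := hx
  obtain ⟨y', hy', rfl⟩ := hy
  refine ⟨x', y', hx', hy', f.map_adj_iff.1 hxy, fun he' => he ?_⟩
  rw [Walk.edges_map, List.mem_map]
  exact ⟨s(x', y'), he', rfl⟩

lemma _root_.IsChordal.induce (h : IsChordal Γ) (s : Set α) : IsChordal (Γ.induce s) :=
  h.of_embedding (Embedding.induce s)

lemma _root_.IsChordal.adj_of_adj_of_walk_avoiding_closedNbhd (hΓ : IsChordal Γ) {a x y : α}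
    (hax : Γ.Adj a x) (hay : Γ.Adj a y) (hxy : x ≠ y) (p : Γ.Walk x y)
    (hp : ∀ z ∈ p.support, z ≠ x → z ≠ y → z ≠ a ∧ ¬Γ.Adj a z) : Γ.Adj x y := by
  by_contra hnxy
  obtain ⟨q, hqp, hq, hchordless⟩ := p.exists_isPath_isChordless_support_subset
  have haq : a ∉ q.support := fun ha => (hp a (hqp ha) hax.ne hay.ne).1 rfl
  have hnbr : ∀ z ∈ q.support, Γ.Adj a z → z = x ∨ z = y := by
    intro z hz hza
    by_contra! hne
    exact (hp z (hqp hz) hne.1 hne.2).2 hza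
  have hlen : 2 ≤ q.length := by
    have h0 : q.length ≠ 0 := fun h => hxy (Walk.eq_of_length_eq_zero h)
    have h1 : q.length ≠ 1 := fun h => hnxy (Walk.adj_of_length_eq_one h)
    omega
  set c := Walk.cons hax (q.concat hay.symm)
  have hcycle : c.IsCycle := by
    refine (Walk.cons_isCycle_iff _ _).2 ⟨hq.concat haq hay.symm, fun he => ?_⟩
    rw [Walk.edges_concat, List.concat_eq_append, List.mem_append, List.mem_singleton] at he
    rcases he with he | he
    · exact haq (q.fst_mem_support_of_mem_edges he)
    · exact hxy (by simpa [hax.ne'] using he)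
  have hsupp : ∀ z ∈ c.support, z = a ∨ z ∈ q.support := by
    simp [c, Walk.support_concat, or_comm]
  have hspoke : ∀ z ∈ q.support, Γ.Adj a z → s(a, z) ∈ c.edges := by
    intro z hz hza
    rcases hnbr z hz hza with rfl | rfl <;> simp [c, Walk.edges_concat, Sym2.eq_swap]
  obtain ⟨u, v, hu, hv, huv, he⟩ := hΓ a c hcycle (by simp [c]; omega)
  have hqc : ∀ e ∈ q.edges, e ∈ c.edges := fun e he => by simp [c, Walk.edges_concat, he]
  rcases hsupp u hu with rfl | hu' <;> rcases hsupp v hv with rfl | hv'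
  · exact huv.ne rfl
  · exact he (hspoke v hv' huv)
  · exact he (Sym2.eq_swap ▸ hspoke u hu' huv.symm)
  · exact he (hqc _ (hchordless.mem_edges hu' hv' huv))

lemma isCompleteSet_induce_iff {s : Set α} {C : Finset s} :
    IsCompleteSet (Γ.induce s) C ↔ IsCompleteSet Γ (C.map (Function.Embedding.subtype _)) := by
  simp [IsCompleteSet, Subtype.ext_iff]

section CliqueSum

variable [DecidableEq α] [DecidableRel Γ.Adj]

variable (Γ) in
def cliqueSum (K : Finset α) : ℤ :=
  ∑ C ∈ K.powerset.filter (fun C => C ≠ ∅ ∧ IsCompleteSet Γ C), (-1 : ℤ) ^ (C.card - 1)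

lemma cliqueSum_of_isCompleteSet {K : Finset α} (hK : IsCompleteSet Γ K) (hne : K.Nonempty) :
    cliqueSum Γ K = 1 := by
  refine (Finset.sum_congr (Finset.filter_congr fun C hC => ?_) fun _ _ => rfl).trans
    (Finset.sum_filter_ne_empty_neg_one_pow_card_sub_one hne)
  exact and_iff_left (hK.subset (Finset.mem_powerset.1 hC))

/-- No edge joins `K \ L` to `L \ K`, so every clique of `K ∪ L` lies in `K` or in `L`. -/
lemma cliqueSum_union {K L : Finset α}
    (hKL : ∀ x ∈ K, x ∉ L → ∀ y ∈ L, y ∉ K → ¬Γ.Adj x y) :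
    cliqueSum Γ (K ∪ L) = cliqueSum Γ K + cliqueSum Γ L - cliqueSum Γ (K ∩ L) := by
  set P := fun C : Finset α => C ≠ ∅ ∧ IsCompleteSet Γ C
  have hunion : (K ∪ L).powerset.filter P = K.powerset.filter P ∪ L.powerset.filter P := by
    ext C
    simp only [Finset.mem_filter, Finset.mem_powerset, Finset.mem_union]
    constructor
    · rintro ⟨hC, hP⟩
      by_contra! h
      obtain ⟨x, hxC, hxL⟩ := Finset.not_subset.1 (h.2 · hP)
      obtain ⟨y, hyC, hyK⟩ := Finset.not_subset.1 (h.1 · hP)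
      have hxK := (Finset.mem_union.1 (hC hxC)).resolve_right hxL
      have hyL := (Finset.mem_union.1 (hC hyC)).resolve_left hyK
      exact hKL x hxK hxL y hyL hyK (hP.2 x hxC y hyC fun hxy => hxL (hxy ▸ hyL))
    · rintro (⟨h, hP⟩ | ⟨h, hP⟩)
      exacts [⟨h.trans Finset.subset_union_left, hP⟩,
        ⟨h.trans Finset.subset_union_right, hP⟩]
  have hinter : K.powerset.filter P ∩ L.powerset.filter P = (K ∩ L).powerset.filter P := by
    ext C
    simp only [Finset.mem_inter, Finset.mem_filter, Finset.mem_powerset, Finset.subset_inter_iff]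
    tauto
  have := Finset.sum_union_inter (s₁ := K.powerset.filter P) (s₂ := L.powerset.filter P)
    (f := fun C => (-1 : ℤ) ^ (C.card - 1))
  simp only [cliqueSum]
  rw [hunion, ← hinter]
  linarith

lemma cliqueSum_induce (K : Finset α) :
    cliqueSum (Γ.induce (K : Set α)) Finset.univ = cliqueSum Γ K := by
  have hsection : ∀ C ⊆ K,
      (C.subtype (· ∈ K)).map (Function.Embedding.subtype (· ∈ (K : Set α))) = C :=
    fun C hC => Finset.subtype_map_of_mem hC
  refine Finset.sum_nbij' (·.map (Function.Embedding.subtype _)) (·.subtype (· ∈ K))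
    (fun C hC => ?_) (fun C hC => ?_) (fun C _ => by ext x; simp) (fun C hC => ?_)
    fun C _ => by rw [Finset.card_map]
  all_goals simp only [Finset.mem_filter, Finset.mem_powerset] at hC ⊢
  · refine ⟨fun x hx => Finset.map_subtype_subset C hx, by simpa using hC.2.1,
      isCompleteSet_induce_iff.1 hC.2.2⟩
  · refine ⟨Finset.subset_univ _, fun h => hC.2.1 ?_, isCompleteSet_induce_iff.2 ?_⟩
    · rw [← hsection C hC.1, h, Finset.map_empty]
    · rw [hsection C hC.1]; exact hC.2.2
  · exact hsection C hC.1

end CliqueSum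

section FarComponent

variable [Fintype α] (Γ) (a b : α)

open Classical in
/-- The vertex set of the component containing `b` of `Γ` minus the closed neighbourhood
of `a`. -/
noncomputable def farComponent : Finset α :=
  Finset.univ.filter fun v => ∃ p : Γ.Walk b v, ∀ z ∈ p.support, z ≠ a ∧ ¬Γ.Adj a z

open Classical in
/-- A minimal `a`–`b` separator, contained in the neighbourhood of `a`. -/
noncomputable def farBoundary : Finset α :=
  Finset.univ.filter fun s => Γ.Adj a s ∧ ∃ c ∈ Γ.farComponent a b, Γ.Adj s c

variable {Γ a b}

lemma mem_farComponent {v : α} :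
    v ∈ Γ.farComponent a b ↔
      ∃ p : Γ.Walk b v, ∀ z ∈ p.support, z ≠ a ∧ ¬Γ.Adj a z := by
  simp [farComponent]

lemma mem_farBoundary {s : α} :
    s ∈ Γ.farBoundary a b ↔ Γ.Adj a s ∧ ∃ c ∈ Γ.farComponent a b, Γ.Adj s c := by
  simp [farBoundary]

lemma ne_and_not_adj_of_mem_farComponent {v : α} (hv : v ∈ Γ.farComponent a b) :
    v ≠ a ∧ ¬Γ.Adj a v := by
  obtain ⟨p, hp⟩ := mem_farComponent.1 hv
  exact hp v p.end_mem_support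

lemma left_notMem_farComponent : a ∉ Γ.farComponent a b :=
  fun h => (ne_and_not_adj_of_mem_farComponent h).1 rfl

lemma right_mem_farComponent (hab : a ≠ b) (hnab : ¬Γ.Adj a b) : b ∈ Γ.farComponent a b :=
  mem_farComponent.2 ⟨.nil, by simpa using ⟨hab.symm, hnab⟩⟩

lemma mem_farComponent_of_adj {v w : α} (hv : v ∈ Γ.farComponent a b) (hvw : Γ.Adj v w)
    (hwa : w ≠ a) (haw : ¬Γ.Adj a w) : w ∈ Γ.farComponent a b := by
  obtain ⟨p, hp⟩ := mem_farComponent.1 hv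
  refine mem_farComponent.2 ⟨p.concat hvw, fun z hz => ?_⟩
  rw [Walk.support_concat, List.mem_append, List.mem_singleton] at hz
  rcases hz with hz | rfl
  exacts [hp z hz, ⟨hwa, haw⟩]

lemma mem_farComponent_or_mem_farBoundary_of_adj {v w : α} (hv : v ∈ Γ.farComponent a b)
    (hvw : Γ.Adj v w) : w ∈ Γ.farComponent a b ∨ w ∈ Γ.farBoundary a b := by
  by_cases hw : w ≠ a ∧ ¬Γ.Adj a w
  · exact .inl (mem_farComponent_of_adj hv hvw hw.1 hw.2)
  rw [not_and_not_right] at hw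
  rcases eq_or_ne w a with rfl | hwa
  · exact absurd hvw.symm (ne_and_not_adj_of_mem_farComponent hv).2
  · exact .inr (mem_farBoundary.2 ⟨hw hwa, v, hv, hvw.symm⟩)

lemma notMem_farComponent_of_mem_farBoundary {s : α} (hs : s ∈ Γ.farBoundary a b) :
    s ∉ Γ.farComponent a b :=
  fun h => (ne_and_not_adj_of_mem_farComponent h).2 (mem_farBoundary.1 hs).1

lemma exists_walk_support_subset_farComponent {v : α} (hv : v ∈ Γ.farComponent a b) :
    ∃ p : Γ.Walk b v, ∀ z ∈ p.support, z ∈ Γ.farComponent a b := by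
  classical
  obtain ⟨p, hp⟩ := mem_farComponent.1 hv
  exact ⟨p, fun z hz => mem_farComponent.2
    ⟨p.takeUntil z hz, fun y hy => hp y (p.support_takeUntil_subset_support hz hy)⟩⟩

lemma farBoundary_isCompleteSet (hΓ : IsChordal Γ) : IsCompleteSet Γ (Γ.farBoundary a b) := by
  intro x hx y hy hxy
  obtain ⟨hax, cx, hcx, hxcx⟩ := mem_farBoundary.1 hx
  obtain ⟨hay, cy, hcy, hycy⟩ := mem_farBoundary.1 hy
  obtain ⟨p, hp⟩ := exists_walk_support_subset_farComponent hcx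
  obtain ⟨q, hq⟩ := exists_walk_support_subset_farComponent hcy
  refine hΓ.adj_of_adj_of_walk_avoiding_closedNbhd hax hay hxy
    (.cons hxcx ((p.reverse.append q).concat hycy.symm)) fun z hz hzx hzy => ?_
  apply ne_and_not_adj_of_mem_farComponent
  simp only [Walk.support_cons, Walk.support_concat, List.mem_cons, List.mem_append,
    Walk.mem_support_append_iff, Walk.support_reverse, List.mem_reverse, List.not_mem_nil, hzx,
    hzy, false_or, or_false] at hz
  rcases hz with hz | hz
  exacts [hp z hz, hq z hz]

lemma farBoundary_nonempty (hconn : Γ.Connected) (hb : b ∈ Γ.farComponent a b) :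
    (Γ.farBoundary a b).Nonempty := by
  obtain ⟨d, -, hd, hd'⟩ := (hconn.preconnected b a).some.exists_boundary_dart
    (Γ.farComponent a b) hb left_notMem_farComponent
  exact ⟨d.snd, (mem_farComponent_or_mem_farBoundary_of_adj hd d.adj).resolve_left hd'⟩

variable [DecidableEq α]

lemma connected_induce_farComponent_union_farBoundary (hb : b ∈ Γ.farComponent a b) :
    (Γ.induce ↑(Γ.farComponent a b ∪ Γ.farBoundary a b)).Connected := by
  refine connected_induce_of_forall_walk b (by simp [hb]) fun v hv => ?_
  rcases Finset.mem_union.1 hv with hv | hv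
  · obtain ⟨p, hp⟩ := exists_walk_support_subset_farComponent hv
    exact ⟨p, fun z hz => Finset.mem_union_left _ (hp z hz)⟩
  · obtain ⟨-, c, hc, hvc⟩ := mem_farBoundary.1 hv
    obtain ⟨p, hp⟩ := exists_walk_support_subset_farComponent hc
    refine ⟨p.concat hvc.symm, fun z hz => ?_⟩
    rw [Walk.support_concat, List.mem_append, List.mem_singleton] at hz
    rcases hz with hz | rfl
    exacts [Finset.mem_union_left _ (hp z hz), Finset.mem_union_right _ hv]

/-- Before reaching the closed neighbourhood of `a`, a walk cannot enter `farComponent Γ a b`. -/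
lemma exists_walk_to_left_avoiding_farComponent {v w : α} (p : Γ.Walk v w)
    (hv : v ∉ Γ.farComponent a b) (hw : w = a ∨ Γ.Adj a w) :
    ∃ q : Γ.Walk v a, ∀ z ∈ q.support, z ∈ (Γ.farComponent a b)ᶜ := by
  have hnbhd : ∀ v, (v = a ∨ Γ.Adj a v) → ∃ q : Γ.Walk v a,
      ∀ z ∈ q.support, z ∈ (Γ.farComponent a b)ᶜ := by
    rintro v (rfl | hav)
    · exact ⟨.nil, by simpa using left_notMem_farComponent⟩
    · refine ⟨.cons hav.symm .nil, ?_⟩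
      simpa using
        ⟨fun h => (ne_and_not_adj_of_mem_farComponent h).2 hav, left_notMem_farComponent⟩
  induction p with
  | nil => exact hnbhd _ hw
  | @cons v c w hvc p ih =>
    by_cases hvN : v = a ∨ Γ.Adj a v
    · exact hnbhd _ hvN
    push Not at hvN
    have hc : c ∉ Γ.farComponent a b := fun hc =>
      hv (mem_farComponent_of_adj hc hvc.symm hvN.1 hvN.2)
    obtain ⟨q, hq⟩ := ih hc hw
    refine ⟨.cons hvc q, fun z hz => ?_⟩
    rw [Walk.support_cons, List.mem_cons] at hz
    rcases hz with rfl | hz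
    exacts [Finset.mem_compl.2 hv, hq z hz]

lemma connected_induce_compl_farComponent (hconn : Γ.Connected) :
    (Γ.induce ↑(Γ.farComponent a b)ᶜ).Connected := by
  refine connected_induce_of_forall_walk a
    (Finset.mem_compl.2 left_notMem_farComponent) fun v hv => ?_
  obtain ⟨q, hq⟩ := exists_walk_to_left_avoiding_farComponent (hconn.preconnected v a).some
    (Finset.mem_compl.1 hv) (.inl rfl)
  exact ⟨q.reverse, fun z hz => hq z (by simpa using hz)⟩

lemma left_notMem_farComponent_union_farBoundary :
    a ∉ Γ.farComponent a b ∪ Γ.farBoundary a b := by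
  rw [Finset.mem_union, not_or]
  exact ⟨left_notMem_farComponent, fun h => (mem_farBoundary.1 h).1.ne rfl⟩

lemma cliqueSum_univ_eq_farComponent_union_farBoundary_add_compl [DecidableRel Γ.Adj] :
    cliqueSum Γ Finset.univ = cliqueSum Γ (Γ.farComponent a b ∪ Γ.farBoundary a b) +
      cliqueSum Γ (Γ.farComponent a b)ᶜ - cliqueSum Γ (Γ.farBoundary a b) := by
  set B := Γ.farComponent a b
  set S := Γ.farBoundary a b
  have hcover : (B ∪ S) ∪ Bᶜ = Finset.univ := by
    rw [Finset.union_right_comm, Finset.union_compl, Finset.union_eq_left]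
    exact Finset.subset_univ S
  have hinter : (B ∪ S) ∩ Bᶜ = S := by
    ext v
    have := notMem_farComponent_of_mem_farBoundary (Γ := Γ) (a := a) (b := b) (s := v)
    simp only [Finset.mem_inter, Finset.mem_union, Finset.mem_compl]
    tauto
  have hsplit : ∀ x ∈ B ∪ S, x ∉ Bᶜ → ∀ y ∈ Bᶜ, y ∉ B ∪ S → ¬Γ.Adj x y :=
    fun x _ hx y _ hy hxy => hy (Finset.mem_union.2
      (mem_farComponent_or_mem_farBoundary_of_adj (Finset.notMem_compl.1 hx) hxy))
  rw [← hcover, cliqueSum_union hsplit, hinter]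

end FarComponent

variable [DecidableEq α] [DecidableRel Γ.Adj]

theorem Connected.cliqueSum_univ_eq_one [Fintype α] (hconn : Γ.Connected) (hΓ : IsChordal Γ) :
    cliqueSum Γ Finset.univ = 1 := by
  induction hn : Fintype.card α using Nat.strong_induction_on generalizing α with
  | _ n ih =>
  by_cases hcomplete : IsCompleteSet Γ Finset.univ
  · exact cliqueSum_of_isCompleteSet hcomplete (Finset.univ_nonempty_iff.2 hconn.nonempty)
  obtain ⟨a, b, hab, hnab⟩ : ∃ a b, a ≠ b ∧ ¬Γ.Adj a b := by
    simpa [IsCompleteSet] using hcomplete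
  have hb := right_mem_farComponent (Γ := Γ) hab hnab
  have hsmaller : ∀ K : Finset α, ∀ x ∉ K, (Γ.induce (K : Set α)).Connected →
      cliqueSum Γ K = 1 := fun K x hx hK => by
    rw [← cliqueSum_induce]
    exact ih _ (hn ▸ Fintype.card_coe K ▸ Finset.card_lt_univ_of_notMem hx) hK
      (hΓ.induce _) rfl
  rw [cliqueSum_univ_eq_farComponent_union_farBoundary_add_compl (a := a) (b := b),
    hsmaller _ a left_notMem_farComponent_union_farBoundary
      (connected_induce_farComponent_union_farBoundary hb),
    hsmaller _ b (Finset.notMem_compl.2 hb) (connected_induce_compl_farComponent hconn),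
    cliqueSum_of_isCompleteSet (farBoundary_isCompleteSet hΓ) (farBoundary_nonempty hconn hb)]
  norm_num

end SimpleGraph

theorem alternating_clique_sum_eq_one_general {V : Type} [DecidableEq V]
    (G : SimpleGraph V) [DecidableRel G.Adj] (H : Finset V)
    (hconn : (G.induce (H : Set V)).Connected)
    (hchordal : IsChordal (G.induce (H : Set V))) :
    ∑ C ∈ H.powerset.filter (fun C => C ≠ ∅ ∧ IsCompleteSet G C),
      (-1 : ℤ) ^ (C.card - 1) = 1 := by
  show G.cliqueSum H = 1
  rw [← G.cliqueSum_induce H]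
  exact hconn.cliqueSum_univ_eq_one hchordal

/-- If the subgraph induced on a nonempty `H ⊆ V` is connected and chordal, then the
alternating sum `Σ_C (−1)^{|C|−1}` over all nonempty complete subsets `C ⊆ H` equals 1. -/
theorem alternating_clique_sum_eq_one {V : Type} [Fintype V] [DecidableEq V]
    (G : SimpleGraph V) [DecidableRel G.Adj] (H : Finset V) (hH : H.Nonempty)
    (hconn : (G.induce (H : Set V)).Connected)
    (hchordal : IsChordal (G.induce (H : Set V))) :
    ∑ C ∈ H.powerset.filter (fun C => C ≠ ∅ ∧ IsCompleteSet G C),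
      (-1 : ℤ) ^ (C.card - 1) = 1 :=
  alternating_clique_sum_eq_one_general G H hconn hchordal
end

section
/- Let G be a simple graph on a finite vertex set V and let H ⊆ V be nonempty. If the induced subgraph G[H] has exactly l connected components H^(1),…,H^(l) and each induced subgraph G[H^(j)] is chordal, then Σ_{C} (−1)^{|C|−1} = l, where the sum runs over all nonempty complete subsets C of H. In particular, if l ≥ 2 the sum is not equal to 1. -/
/-!
The alternating sum over the nonempty cliques of `G[A]` is the Euler characteristic `χ(A)` of
the clique complex of `G[A]`. It is additive over vertex sets with no edges between them, so it
suffices to show `χ(A) = 1` when `G[A]` is connected and chordal. Removing a vertex `v` gives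
`χ(A) = χ(A \ {v}) + 1 - χ(N)`, where `N` is the neighbourhood of `v` in `A`, because the
cliques through `v` are the cones over the (possibly empty) cliques of `N`. Choose `v` so that
`A \ {v}` stays connected. Chordality makes `N` connected too: a path between two neighbours of
`v` outside `v` closes up through `v` to a cycle, and a chord of that cycle either shortens the
path or splits it at another neighbour of `v`. By induction `χ(A \ {v}) = χ(N) = 1`.
-/

open Finset

section IsCompleteSet

variable {α : Type} [DecidableEq α] {Γ : SimpleGraph α}

lemma isCompleteSet_insert {S : Finset α} {v : α} :
    IsCompleteSet Γ (insert v S) ↔ IsCompleteSet Γ S ∧ ∀ u ∈ S, v ≠ u → Γ.Adj v u := by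
  change Γ.IsClique _ ↔ Γ.IsClique _ ∧ _
  rw [coe_insert, SimpleGraph.isClique_insert]
  rfl

lemma IsCompleteSet.subset_or_subset {A B C : Finset α} (hC : IsCompleteSet Γ C)
    (hAB : C ⊆ A ∪ B) (hno : ∀ u ∈ A, ∀ w ∈ B, ¬ Γ.Adj u w) : C ⊆ A ∨ C ⊆ B := by
  by_contra! h
  obtain ⟨a, haC, haA⟩ := not_subset.mp h.1
  obtain ⟨b, hbC, hbB⟩ := not_subset.mp h.2
  have haB : a ∈ B := (mem_union.mp (hAB haC)).resolve_left haA
  have hbA : b ∈ A := (mem_union.mp (hAB hbC)).resolve_right hbB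
  exact hno b hbA a haB (hC b hbC a haC (by rintro rfl; exact haA hbA))

end IsCompleteSet

namespace SimpleGraph

variable {α : Type} {Γ : SimpleGraph α}

section CliqueEulerChar

variable [DecidableEq α] [DecidableRel Γ.Adj]

variable (Γ) in
def cliqueEulerChar (A : Finset α) : ℤ :=
  ∑ C ∈ A.powerset.filter (fun C => C ≠ ∅ ∧ IsCompleteSet Γ C), (-1 : ℤ) ^ (C.card - 1)

lemma sum_neg_one_pow_card_isCompleteSet (N : Finset α) :
    ∑ C ∈ N.powerset.filter (IsCompleteSet Γ), (-1 : ℤ) ^ C.card = 1 - Γ.cliqueEulerChar N := by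
  have hins : N.powerset.filter (IsCompleteSet Γ) =
      insert ∅ (N.powerset.filter fun C => C ≠ ∅ ∧ IsCompleteSet Γ C) := by
    ext C
    rcases eq_or_ne C ∅ with rfl | hC
    · simp [IsCompleteSet]
    · simp [hC]
  rw [hins, sum_insert (by simp), cliqueEulerChar, sub_eq_add_neg, ← sum_neg_distrib, card_empty,
    pow_zero]
  congr 1
  refine sum_congr rfl fun C hC => ?_
  obtain ⟨k, hk⟩ := Nat.exists_eq_succ_of_ne_zero (card_ne_zero.mpr
    (nonempty_iff_ne_empty.mpr (mem_filter.mp hC).2.1))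
  simp [hk, pow_succ]

lemma cliqueEulerChar_eq_erase_add {A : Finset α} {v : α} (hv : v ∈ A) :
    Γ.cliqueEulerChar A =
      Γ.cliqueEulerChar (A.erase v) + 1 - Γ.cliqueEulerChar (A.filter (Γ.Adj v)) := by
  have hvN : v ∉ A.filter (Γ.Adj v) := fun h => Γ.loopless.irrefl v (mem_filter.mp h).2
  have hwithout : (A.powerset.filter fun C => C ≠ ∅ ∧ IsCompleteSet Γ C).filter (v ∉ ·) =
      (A.erase v).powerset.filter fun C => C ≠ ∅ ∧ IsCompleteSet Γ C := by
    ext C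
    simp only [mem_filter, mem_powerset, subset_erase]
    tauto
  have hwith : ∑ C ∈ (A.powerset.filter fun C => C ≠ ∅ ∧ IsCompleteSet Γ C).filter (v ∈ ·),
      (-1 : ℤ) ^ (C.card - 1) =
      ∑ S ∈ (A.filter (Γ.Adj v)).powerset.filter (IsCompleteSet Γ), (-1 : ℤ) ^ S.card := by
    refine sum_nbij' (fun C => C.erase v) (insert v) ?_ ?_ ?_ ?_ ?_
    · intro C hC
      simp only [mem_filter, mem_powerset] at hC ⊢
      obtain ⟨⟨hCA, -, hcl⟩, hvC⟩ := hC
      rw [← insert_erase hvC, isCompleteSet_insert] at hcl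
      exact ⟨fun u hu => mem_filter.mpr
        ⟨hCA (mem_of_mem_erase hu), hcl.2 u hu (ne_of_mem_erase hu).symm⟩, hcl.1⟩
    · intro S hS
      simp only [mem_filter, mem_powerset] at hS ⊢
      obtain ⟨hSN, hcl⟩ := hS
      exact ⟨⟨insert_subset hv (hSN.trans (filter_subset _ _)), insert_ne_empty _ _,
        isCompleteSet_insert.mpr ⟨hcl, fun u hu _ => (mem_filter.mp (hSN hu)).2⟩⟩,
        mem_insert_self _ _⟩
    · intro C hC
      exact insert_erase (mem_filter.mp hC).2
    · intro S hS
      exact erase_insert fun h => hvN (mem_powerset.mp (mem_filter.mp hS).1 h)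
    · intro C hC
      rw [card_erase_of_mem (mem_filter.mp hC).2]
  rw [cliqueEulerChar, ← sum_filter_add_sum_filter_not _ (v ∈ ·), hwith, hwithout,
    sum_neg_one_pow_card_isCompleteSet, ← cliqueEulerChar]
  ring

lemma cliqueEulerChar_empty : Γ.cliqueEulerChar ∅ = 0 := by
  simp [cliqueEulerChar, filter_singleton]

lemma cliqueEulerChar_singleton (a : α) : Γ.cliqueEulerChar {a} = 1 := by
  rw [cliqueEulerChar_eq_erase_add (mem_singleton_self a)]
  simp [filter_singleton, cliqueEulerChar_empty]

lemma cliqueEulerChar_union {A B : Finset α} (hAB : Disjoint A B)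
    (hno : ∀ u ∈ A, ∀ w ∈ B, ¬ Γ.Adj u w) :
    Γ.cliqueEulerChar (A ∪ B) = Γ.cliqueEulerChar A + Γ.cliqueEulerChar B := by
  have hsplit : (A ∪ B).powerset.filter (fun C => C ≠ ∅ ∧ IsCompleteSet Γ C) =
      A.powerset.filter (fun C => C ≠ ∅ ∧ IsCompleteSet Γ C) ∪
        B.powerset.filter (fun C => C ≠ ∅ ∧ IsCompleteSet Γ C) := by
    ext C
    simp only [mem_union, mem_filter, mem_powerset]
    constructor
    · rintro ⟨hC, hne, hcl⟩
      exact (hcl.subset_or_subset hC hno).imp (⟨·, hne, hcl⟩) (⟨·, hne, hcl⟩)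
    · rintro (⟨hC, hC'⟩ | ⟨hC, hC'⟩)
      exacts [⟨hC.trans subset_union_left, hC'⟩, ⟨hC.trans subset_union_right, hC'⟩]
  rw [cliqueEulerChar, hsplit, sum_union]
  · rfl
  refine Finset.disjoint_left.mpr fun C hA hB => ?_
  simp only [mem_filter, mem_powerset] at hA hB
  obtain ⟨c, hc⟩ := nonempty_iff_ne_empty.mpr hA.2.1
  exact Finset.disjoint_left.mp hAB (hA.1 hc) (hB.1 hc)

lemma cliqueEulerChar_biUnion {ι : Type*} [DecidableEq ι] (t : Finset ι) (B : ι → Finset α)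
    (hdisj : (t : Set ι).PairwiseDisjoint B)
    (hno : ∀ i ∈ t, ∀ j ∈ t, i ≠ j → ∀ u ∈ B i, ∀ w ∈ B j, ¬ Γ.Adj u w) :
    Γ.cliqueEulerChar (t.biUnion B) = ∑ i ∈ t, Γ.cliqueEulerChar (B i) := by
  induction t using Finset.induction_on with
  | empty => simp [cliqueEulerChar_empty]
  | insert i t hi ih =>
    have hne : ∀ j ∈ t, i ≠ j := fun j hj => by rintro rfl; exact hi hj
    rw [biUnion_insert, sum_insert hi, cliqueEulerChar_union, ih]
    · exact hdisj.subset (by simp)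
    · exact fun j hj k hk => hno j (mem_insert_of_mem hj) k (mem_insert_of_mem hk)
    · exact (disjoint_biUnion_right _ _ _).mpr fun j hj =>
        hdisj (by simp) (by simp [hj]) (hne j hj)
    · intro u hu w hw
      obtain ⟨j, hj, hw⟩ := mem_biUnion.mp hw
      exact hno i (mem_insert_self i t) j (mem_insert_of_mem hj) (hne j hj) u hu w hw

end CliqueEulerChar

lemma reachable_induce_iff {s : Set α} {x y : α} (hx : x ∈ s) (hy : y ∈ s) :
    (Γ.induce s).Reachable ⟨x, hx⟩ ⟨y, hy⟩ ↔ ∃ p : Γ.Walk x y, ∀ z ∈ p.support, z ∈ s := by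
  constructor
  · rintro ⟨p⟩
    refine ⟨p.map (Embedding.induce s).toHom, fun z hz => ?_⟩
    -- restate with the endpoints in the form `Walk.support_map` expects
    replace hz : z ∈ (p.map (Embedding.induce s).toHom).support := hz
    rw [Walk.support_map, List.mem_map] at hz
    obtain ⟨z, -, rfl⟩ := hz
    exact z.2
  · rintro ⟨p, hp⟩
    exact ⟨p.induce s hp⟩

lemma Preconnected.exists_adj_of_induce {s : Set α} {u v : α} (h : (Γ.induce s).Preconnected)
    (hu : u ∈ s) (hv : v ∈ s) (huv : u ≠ v) : ∃ w ∈ s, Γ.Adj v w := by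
  obtain ⟨p, hp⟩ := (reachable_induce_iff hv hu).mp (h _ _)
  cases p with
  | nil => exact absurd rfl huv
  | cons hvw q => exact ⟨_, hp _ (List.mem_cons_of_mem _ q.start_mem_support), hvw⟩

lemma Connected.exists_connected_induce_diff_singleton {s : Set α} [Finite s]
    (h : (Γ.induce s).Connected) (hs : s.Nontrivial) :
    ∃ v ∈ s, (Γ.induce (s \ {v})).Connected := by
  have := hs.coe_sort
  obtain ⟨⟨v, hv⟩, hconn⟩ := h.exists_connected_induce_compl_singleton_of_finite_nontrivial
  refine ⟨v, hv, hconn.map ⟨fun z => ⟨z.1.1, z.1.2, fun h => z.2 (Subtype.ext h)⟩, id⟩ ?_⟩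
  rintro ⟨z, hzs, hzv⟩
  exact ⟨⟨⟨z, hzs⟩, fun h => hzv (congrArg Subtype.val h)⟩, rfl⟩

lemma Walk.one_lt_length_of_notMem_edges {a b : α} (q : Γ.Walk a b) (hab : Γ.Adj a b)
    (he : s(a, b) ∉ q.edges) : 1 < q.length := by
  cases q with
  | nil => exact absurd rfl hab.ne
  | cons h q =>
    cases q with
    | nil => simp at he
    | cons => simp

lemma Walk.exists_shorter_append {x a b y : α} (r : Γ.Walk x a) (q : Γ.Walk a b)
    (t : Γ.Walk b y) (hab : Γ.Adj a b) (he : s(a, b) ∉ q.edges) :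
    ∃ w : Γ.Walk x y, w.support ⊆ (r.append (q.append t)).support ∧
      w.length < (r.append (q.append t)).length := by
  refine ⟨r.append (cons hab t), fun z hz => ?_, ?_⟩
  · simp only [mem_support_append_iff, support_cons, List.mem_cons] at hz ⊢
    rcases hz with hz | rfl | hz
    exacts [Or.inl hz, Or.inl r.end_mem_support, Or.inr (Or.inr hz)]
  · have := q.one_lt_length_of_notMem_edges hab he
    simp only [length_append, length_cons]
    omega

lemma Walk.exists_shorter_of_adj_of_notMem_edges_s11 {x y a b : α} (p : Γ.Walk x y)
    (ha : a ∈ p.support) (hb : b ∈ p.support) (hab : Γ.Adj a b) (he : s(a, b) ∉ p.edges) :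
    ∃ w : Γ.Walk x y, w.support ⊆ p.support ∧ w.length < p.length := by
  classical
  have hb' : b ∈ (p.takeUntil a ha).support ∨ b ∈ (p.dropUntil a ha).support := by
    rwa [← mem_support_append_iff, take_spec]
  rcases hb' with hb' | hb'
  · set r := p.takeUntil a ha
    have he' : s(b, a) ∉ (r.dropUntil b hb').edges := by
      rw [Sym2.eq_swap]
      exact fun h => he (p.edges_takeUntil_subset_edges ha (r.edges_dropUntil_subset_edges hb' h))
    have := exists_shorter_append (r.takeUntil b hb') (r.dropUntil b hb') (p.dropUntil a ha)
      hab.symm he'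
    rwa [append_assoc, take_spec, take_spec] at this
  · set r := p.dropUntil a ha
    have he' : s(a, b) ∉ (r.takeUntil b hb').edges :=
      fun h => he (p.edges_dropUntil_subset_edges ha (r.edges_takeUntil_subset_edges hb' h))
    have := exists_shorter_append (p.takeUntil a ha) (r.takeUntil b hb') (r.dropUntil b hb')
      hab he'
    rwa [take_spec, take_spec] at this

lemma Walk.IsPath.cons_concat_isCycle {u x y : α} {p : Γ.Walk x y} (hp : p.IsPath)
    (hu : u ∉ p.support) (hxy : x ≠ y) (hux : Γ.Adj u x) (hyu : Γ.Adj y u) :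
    (Walk.cons hux (p.concat hyu)).IsCycle := by
  refine (Walk.cons_isCycle_iff _ _).mpr ⟨hp.concat hu _, fun h => ?_⟩
  simp only [Walk.edges_concat, List.concat_eq_append, List.mem_append, List.mem_singleton,
    Sym2.eq_iff] at h
  rcases h with h | h | h
  exacts [hu (p.fst_mem_support_of_mem_edges h), hux.ne' h.2, hxy h.2]

def ChordalOn (Γ : SimpleGraph α) (s : Set α) : Prop :=
  ∀ (v : α) (w : Γ.Walk v v), w.IsCycle → 4 ≤ w.length → (∀ z ∈ w.support, z ∈ s) →
    ∃ x y, x ∈ w.support ∧ y ∈ w.support ∧ Γ.Adj x y ∧ s(x, y) ∉ w.edges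

lemma ChordalOn.mono {s t : Set α} (h : Γ.ChordalOn s) (hts : t ⊆ s) : Γ.ChordalOn t :=
  fun v w hw hlen hsupp => h v w hw hlen fun z hz => hts (hsupp z hz)

lemma chordalOn_of_isChordal_induce {s : Set α} (h : IsChordal (Γ.induce s)) :
    Γ.ChordalOn s := by
  intro v w hw hlen hsupp
  set f : Γ.induce s →g Γ := (Embedding.induce s).toHom
  have hf : Function.Injective f := (Embedding.induce (G := Γ) s).injective
  have hmap : (w.induce s hsupp).map f = w := w.map_induce hsupp
  have hsupp' : w.support = (w.induce s hsupp).support.map f := by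
    rw [← Walk.support_map, hmap]; rfl
  have hedges : w.edges = (w.induce s hsupp).edges.map (Sym2.map f) := by
    rw [← Walk.edges_map, hmap]; rfl
  obtain ⟨a, b, ha, hb, hab, he⟩ := h _ (w.induce s hsupp)
    (by rwa [← Walk.isCycle_map_iff_of_injective hf, hmap])
    (by rwa [← Walk.length_map f, hmap])
  refine ⟨a, b, hsupp' ▸ List.mem_map_of_mem ha, hsupp' ▸ List.mem_map_of_mem hb, hab,
    fun hab' => he ?_⟩
  obtain ⟨e, he, hfe⟩ := List.mem_map.mp (hedges ▸ hab')
  rwa [Sym2.map.injective hf (hfe.trans (Sym2.map_mk f a b).symm)] at he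

/-- A chord of the cycle `v → x ⇝ y → v` either joins `v` to an interior vertex of the path or
shortcuts the path. -/
lemma ChordalOn.exists_adj_interior_or_exists_shorter {s : Set α} {v x y : α}
    (hs : Γ.ChordalOn s) (hv : v ∈ s) {P : Γ.Walk x y} (hP : P.IsPath)
    (hPs : ∀ z ∈ P.support, z ∈ s \ {v}) (hx : Γ.Adj v x) (hy : Γ.Adj v y) (hxy : x ≠ y)
    (hadj : ¬ Γ.Adj x y) :
    (∃ b ∈ P.support, Γ.Adj v b ∧ b ≠ x ∧ b ≠ y) ∨
      ∃ q : Γ.Walk x y, q.support ⊆ P.support ∧ q.length < P.length := by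
  have hvP : v ∉ P.support := fun h => (hPs v h).2 rfl
  set c := Walk.cons hx (P.concat hy.symm)
  have hlen : 4 ≤ c.length := by
    have h0 : P.length ≠ 0 := fun h => hxy (Walk.eq_of_length_eq_zero h)
    have h1 : P.length ≠ 1 := fun h => hadj (Walk.adj_of_length_eq_one h)
    simp only [c, Walk.length_cons, Walk.length_concat]
    omega
  have hmem : ∀ z ∈ c.support, z = v ∨ z ∈ P.support := fun z hz => by
    simpa [c, Walk.support_concat, or_comm] using hz
  obtain ⟨a, b, ha, hb, hab, he⟩ := hs v c (hP.cons_concat_isCycle hvP hxy hx hy.symm) hlen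
    fun z hz => (hmem z hz).elim (· ▸ hv) fun h => (hPs z h).1
  have interior : ∀ b, s(v, b) ∉ c.edges → b ≠ x ∧ b ≠ y := fun b hvb =>
    ⟨by rintro rfl; simp [c] at hvb,
      by rintro rfl; simp [c, Walk.edges_concat, Sym2.eq_swap] at hvb⟩
  obtain rfl | haP := hmem a ha <;> obtain rfl | hbP := hmem b hb
  · exact absurd hab (Γ.loopless.irrefl _)
  · exact .inl ⟨b, hbP, hab, interior b he⟩
  · exact .inl ⟨a, haP, hab.symm, interior a (by rwa [Sym2.eq_swap])⟩
  · exact .inr (P.exists_shorter_of_adj_of_notMem_edges_s11 haP hbP hab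
      fun h => he (by simp [c, Walk.edges_concat, h]))

lemma ChordalOn.exists_walk_neighborSet {s : Set α} {v : α} (hs : Γ.ChordalOn s) (hv : v ∈ s) :
    ∀ {x y : α} (p : Γ.Walk x y), (∀ z ∈ p.support, z ∈ s \ {v}) → Γ.Adj v x → Γ.Adj v y →
      ∃ q : Γ.Walk x y, ∀ z ∈ q.support, z ∈ s ∩ Γ.neighborSet v := by
  classical
  intro x y p
  induction hn : p.length using Nat.strong_induction_on generalizing x y p with
  | _ n ih =>
  intro hp hx hy
  set P := p.bypass
  have hP : ∀ z ∈ P.support, z ∈ s \ {v} := fun z hz => hp z (p.support_bypass_subset_support hz)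
  have shorter : ∀ {a b : α} (q : Γ.Walk a b), q.length < P.length →
      (∀ z ∈ q.support, z ∈ s \ {v}) → Γ.Adj v a → Γ.Adj v b →
      ∃ r : Γ.Walk a b, ∀ z ∈ r.support, z ∈ s ∩ Γ.neighborSet v :=
    fun q hq => ih _ (hq.trans_le (hn ▸ p.length_bypass_le_length)) q rfl
  have hxN : x ∈ s ∩ Γ.neighborSet v := ⟨(hP x P.start_mem_support).1, hx⟩
  have hyN : y ∈ s ∩ Γ.neighborSet v := ⟨(hP y P.end_mem_support).1, hy⟩
  by_cases hxy : x = y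
  · subst hxy
    exact ⟨.nil, by simpa using hxN⟩
  by_cases hadj : Γ.Adj x y
  · exact ⟨.cons hadj .nil, by simpa using ⟨hxN, hyN⟩⟩
  rcases hs.exists_adj_interior_or_exists_shorter hv p.bypass_isPath hP hx hy hxy hadj with
    ⟨b, hb, hvb, hbx, hby⟩ | ⟨q, hqP, hq⟩
  · obtain ⟨q₁, hq₁⟩ := shorter (P.takeUntil b hb) (Walk.length_takeUntil_lt_length hb hby)
      (fun z hz => hP z (P.support_takeUntil_subset_support hb hz)) hx hvb
    obtain ⟨q₂, hq₂⟩ := shorter (P.dropUntil b hb) (Walk.length_dropUntil_lt_length hb hbx)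
      (fun z hz => hP z (P.support_dropUntil_subset_support hb hz)) hvb hy
    refine ⟨q₁.append q₂, fun z hz => ?_⟩
    rcases (Walk.mem_support_append_iff _ _).mp hz with hz | hz
    exacts [hq₁ z hz, hq₂ z hz]
  · exact shorter q hq (fun z hz => hP z (hqP hz)) hx hy

lemma ChordalOn.preconnected_induce_neighborSet {s : Set α} {v : α} (hs : Γ.ChordalOn s)
    (hv : v ∈ s) (hconn : (Γ.induce (s \ {v})).Preconnected) :
    (Γ.induce (s ∩ Γ.neighborSet v)).Preconnected := by
  rintro ⟨x, hxs, hx⟩ ⟨y, hys, hy⟩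
  obtain ⟨p, hp⟩ := (reachable_induce_iff _ _).mp (hconn ⟨x, hxs, hx.ne'⟩ ⟨y, hys, hy.ne'⟩)
  exact (reachable_induce_iff _ _).mpr (hs.exists_walk_neighborSet hv p hp hx hy)

theorem ChordalOn.cliqueEulerChar_eq_one [DecidableEq α] [DecidableRel Γ.Adj] {A : Finset α}
    (hch : Γ.ChordalOn A) (hconn : (Γ.induce (A : Set α)).Connected) :
    Γ.cliqueEulerChar A = 1 := by
  induction A using Finset.strongInduction with
  | H A ih =>
  obtain ⟨a, rfl⟩ | hnt :=
    (coe_nonempty.mp (Set.nonempty_coe_sort.mp hconn.nonempty)).exists_eq_singleton_or_nontrivial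
  · exact cliqueEulerChar_singleton a
  obtain ⟨v, hv, hconn'⟩ := hconn.exists_connected_induce_diff_singleton hnt
  obtain ⟨u, hu, huv⟩ := hnt.exists_ne v
  obtain ⟨w, hw, hvw⟩ := hconn.preconnected.exists_adj_of_induce hu hv huv
  have hN : (A.filter (Γ.Adj v) : Set α) = (A : Set α) ∩ Γ.neighborSet v := by
    ext; simp
  have hNconn : (Γ.induce (A.filter (Γ.Adj v) : Set α)).Connected := by
    rw [hN]
    have : Nonempty ↑((A : Set α) ∩ Γ.neighborSet v) := ⟨⟨w, hw, hvw⟩⟩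
    exact ⟨hch.preconnected_induce_neighborSet hv hconn'.preconnected⟩
  rw [cliqueEulerChar_eq_erase_add hv,
    ih _ (erase_ssubset hv) (hch.mono (coe_subset.mpr (erase_subset v A))) (by rwa [coe_erase]),
    ih _ (filter_ssubset.mpr ⟨v, hv, Γ.loopless.irrefl v⟩)
      (hch.mono (coe_subset.mpr (filter_subset _ A))) hNconn]
  ring

end SimpleGraph

theorem alternating_clique_sum_eq_card_components_general {V : Type} [DecidableEq V]
    (G : SimpleGraph V) [DecidableRel G.Adj] (H : Finset V)
    (l : ℕ) (Hc : Fin l → Finset V)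
    (hdisj : ∀ j j', j ≠ j' → Disjoint (Hc j) (Hc j'))
    (hunion : H = Finset.univ.biUnion Hc)
    (hnoedge : ∀ j j', j ≠ j' → ∀ u ∈ Hc j, ∀ v ∈ Hc j', ¬ G.Adj u v)
    (hconn : ∀ j, (G.induce (Hc j : Set V)).Connected)
    (hchordal : ∀ j, IsChordal (G.induce (Hc j : Set V))) :
    (∑ C ∈ H.powerset.filter (fun C => C ≠ ∅ ∧ IsCompleteSet G C),
        (-1 : ℤ) ^ (C.card - 1) = (l : ℤ)) ∧
      (2 ≤ l →
        ∑ C ∈ H.powerset.filter (fun C => C ≠ ∅ ∧ IsCompleteSet G C),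
          (-1 : ℤ) ^ (C.card - 1) ≠ 1) := by
  have hcomponent : ∀ j, G.cliqueEulerChar (Hc j) = 1 := fun j =>
    (SimpleGraph.chordalOn_of_isChordal_induce (hchordal j)).cliqueEulerChar_eq_one (hconn j)
  have hsum : G.cliqueEulerChar H = l := by
    rw [hunion, SimpleGraph.cliqueEulerChar_biUnion _ _ (fun i _ j _ => hdisj i j)
      (fun i _ j _ => hnoedge i j)]
    simp [hcomponent]
  refine ⟨hsum, fun hl hone => ?_⟩
  have : (l : ℤ) = 1 := hsum.symm.trans hone
  omega

/-- If the subgraph induced on a nonempty `H ⊆ V` has exactly `l` connected components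
`H⁽¹⁾,…,H⁽ˡ⁾` (encoded as a partition of `H` into nonempty pieces, each inducing a
connected subgraph, with no edges between distinct pieces) and each component induces a
chordal subgraph, then the alternating sum `Σ_C (−1)^{|C|−1}` over all nonempty complete
subsets `C ⊆ H` equals `l`; in particular if `l ≥ 2` it is not equal to 1. -/
theorem alternating_clique_sum_eq_card_components {V : Type} [Fintype V] [DecidableEq V]
    (G : SimpleGraph V) [DecidableRel G.Adj] (H : Finset V) (hH : H.Nonempty)
    (l : ℕ) (Hc : Fin l → Finset V)
    (hne : ∀ j, (Hc j).Nonempty)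
    (hdisj : ∀ j j', j ≠ j' → Disjoint (Hc j) (Hc j'))
    (hunion : H = Finset.univ.biUnion Hc)
    (hnoedge : ∀ j j', j ≠ j' → ∀ u ∈ Hc j, ∀ v ∈ Hc j', ¬ G.Adj u v)
    (hconn : ∀ j, (G.induce (Hc j : Set V)).Connected)
    (hchordal : ∀ j, IsChordal (G.induce (Hc j : Set V))) :
    (∑ C ∈ H.powerset.filter (fun C => C ≠ ∅ ∧ IsCompleteSet G C),
        (-1 : ℤ) ^ (C.card - 1) = (l : ℤ)) ∧
      (2 ≤ l →
        ∑ C ∈ H.powerset.filter (fun C => C ≠ ∅ ∧ IsCompleteSet G C),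
          (-1 : ℤ) ^ (C.card - 1) ≠ 1) :=
  alternating_clique_sum_eq_card_components_general G H l Hc hdisj hunion hnoedge hconn hchordal
end

section
/- Let p : I → ℝ, let C ⊆ V, D ⊆ C, and let i_D be a tuple on D. For A ⊆ V and a tuple i_A on A write m(i_A) = Σ_{j∈I : j_A = i_A} p(j) for the A-marginal. Then the C-marginal at the cell that equals i_D on D and baseline on C∖D satisfies the inclusion–exclusion identity Σ_{j∈I : j_D = i_D, j_γ = i*_γ ∀γ∈C∖D} p(j) = Σ_{F⊆C∖D} (−1)^{|F|} Σ_{l_F∈I_F*} m(i_D, l_F), where (i_D, l_F) denotes the tuple on D∪F equal to i_D on D and l_F on F. -/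
open Finset

lemma real_sum_powerset_neg_one_pow_card {α : Type*} [DecidableEq α] {x : Finset α} :
    (∑ m ∈ x.powerset, (-1 : ℝ) ^ m.card) = if x = ∅ then 1 else 0 := by
  have := @Finset.sum_powerset_neg_one_pow_card α _ x
  have h : ((∑ m ∈ x.powerset, (-1 : ℤ) ^ m.card : ℤ) : ℝ)
      = ∑ m ∈ x.powerset, (-1 : ℝ) ^ m.card := by push_cast; rfl
  rw [← h, this]
  split <;> norm_num

/-- Collapsing the sum over cells `l` with support exactly `F`. -/
lemma collapse_l {V : Type} [Fintype V] [DecidableEq V]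
    {I : V → Type} [∀ γ, Fintype (I γ)] [∀ γ, DecidableEq (I γ)]
    (b : ∀ γ, I γ) (p : (∀ γ, I γ) → ℝ) (D : Finset V) (i : ∀ γ, I γ) (F : Finset V) :
    ∑ l ∈ Finset.univ.filter (fun l : (∀ γ, I γ) => cellSupport b l = F),
      ∑ j ∈ Finset.univ.filter
          (fun j : (∀ γ, I γ) => (∀ γ ∈ D, j γ = i γ) ∧ ∀ γ ∈ F, j γ = l γ), p j
    = ∑ j ∈ Finset.univ.filter
          (fun j : (∀ γ, I γ) => (∀ γ ∈ D, j γ = i γ) ∧ ∀ γ ∈ F, j γ ≠ b γ), p j := by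
  classical
  rw [Finset.sum_sigma' (f := fun (_ l : (∀ γ, I γ)) => p l)]
  refine Finset.sum_nbij' (fun x => x.2)
    (fun j => ⟨fun γ => if γ ∈ F then j γ else b γ, j⟩) ?_ ?_ ?_ ?_ ?_
  · rintro ⟨l, j⟩ hx
    simp only [Finset.mem_sigma, Finset.mem_filter, Finset.mem_univ, true_and] at hx ⊢
    obtain ⟨hl, hjD, hjF⟩ := hx
    refine ⟨hjD, fun γ hγ => ?_⟩
    rw [hjF γ hγ]
    have : γ ∈ cellSupport b l := hl ▸ hγ
    simpa [cellSupport] using this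
  · intro j hj
    simp only [Finset.mem_filter, Finset.mem_univ, true_and] at hj
    simp only [Finset.mem_sigma, Finset.mem_filter, Finset.mem_univ, true_and]
    refine ⟨?_, hj.1, fun γ hγ => by simp [hγ]⟩
    ext γ
    simp only [cellSupport, Finset.mem_filter, Finset.mem_univ, true_and]
    by_cases hγ : γ ∈ F
    · simp [hγ, hj.2 γ hγ]
    · simp [hγ]
  · rintro ⟨l, j⟩ hx
    simp only [Finset.mem_sigma, Finset.mem_filter, Finset.mem_univ, true_and] at hx
    obtain ⟨hl, _, hjF⟩ := hx
    have hleq : (fun γ => if γ ∈ F then j γ else b γ) = l := by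
      funext γ
      by_cases hγ : γ ∈ F
      · simp [hγ, hjF γ hγ]
      · have : γ ∉ cellSupport b l := hl ▸ hγ
        simp only [cellSupport, Finset.mem_filter, Finset.mem_univ, true_and, not_not] at this
        simp [hγ, this]
    simp only [hleq]
  · intro j _; rfl
  · intro x _; rfl

/-- Inclusion–exclusion for marginals: for `D ⊆ C`, the `C`-marginal of `p` at the cell
equal to `i_D` on `D` and baseline on `C ∖ D` equals
`Σ_{F ⊆ C∖D} (−1)^{|F|} Σ_{l_F ∈ I_F*} m(i_D, l_F)`, where `m` denotes the
`(D ∪ F)`-marginal and a tuple `l_F ∈ I_F*` is represented by the unique cell whose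
support is exactly `F`. -/
theorem marginal_inclusion_exclusion {V : Type} [Fintype V] [DecidableEq V]
    {I : V → Type} [∀ γ, Fintype (I γ)] [∀ γ, DecidableEq (I γ)]
    (b : ∀ γ, I γ) (p : (∀ γ, I γ) → ℝ) (C D : Finset V) (hDC : D ⊆ C)
    (i : ∀ γ, I γ) :
    ∑ j ∈ Finset.univ.filter
        (fun j : (∀ γ, I γ) => (∀ γ ∈ D, j γ = i γ) ∧ ∀ γ ∈ C \ D, j γ = b γ), p j =
      ∑ F ∈ (C \ D).powerset, (-1 : ℝ) ^ F.card *
        ∑ l ∈ Finset.univ.filter (fun l : (∀ γ, I γ) => cellSupport b l = F),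
          ∑ j ∈ Finset.univ.filter
              (fun j : (∀ γ, I γ) => (∀ γ ∈ D, j γ = i γ) ∧ ∀ γ ∈ F, j γ = l γ), p j := by
  classical
  have hcol : ∀ F ∈ (C \ D).powerset, (-1 : ℝ) ^ F.card *
        (∑ l ∈ Finset.univ.filter (fun l : (∀ γ, I γ) => cellSupport b l = F),
          ∑ j ∈ Finset.univ.filter
              (fun j : (∀ γ, I γ) => (∀ γ ∈ D, j γ = i γ) ∧ ∀ γ ∈ F, j γ = l γ), p j)
      = ∑ j ∈ Finset.univ.filter (fun j : (∀ γ, I γ) => ∀ γ ∈ D, j γ = i γ),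
          (if ∀ γ ∈ F, j γ ≠ b γ then (-1 : ℝ) ^ F.card * p j else 0) := by
    intro F _
    rw [collapse_l b p D i F, Finset.mul_sum, Finset.sum_filter, Finset.sum_filter]
    apply Finset.sum_congr rfl
    intro j _
    rw [ite_and]
  rw [Finset.sum_congr rfl hcol, Finset.sum_comm]
  have hpt : ∀ j ∈ Finset.univ.filter (fun j : (∀ γ, I γ) => ∀ γ ∈ D, j γ = i γ),
      (∑ F ∈ (C \ D).powerset, if ∀ γ ∈ F, j γ ≠ b γ then (-1 : ℝ) ^ F.card * p j else 0)
      = (if ∀ γ ∈ C \ D, j γ = b γ then 1 else 0) * p j := by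
    intro j _
    have : (∑ F ∈ (C \ D).powerset, if ∀ γ ∈ F, j γ ≠ b γ then (-1 : ℝ) ^ F.card * p j else 0)
        = (∑ F ∈ ((C \ D) ∩ cellSupport b j).powerset, (-1 : ℝ) ^ F.card) * p j := by
      rw [Finset.sum_mul, ← Finset.sum_filter]
      apply Finset.sum_congr
      · ext F
        simp only [Finset.mem_filter, Finset.mem_powerset]
        constructor
        · rintro ⟨h1, h2⟩ x hx
          exact Finset.mem_inter.2 ⟨h1 hx, by simp [cellSupport, h2 x hx]⟩
        · intro h
          refine ⟨fun x hx => (Finset.mem_inter.1 (h hx)).1, fun x hx => ?_⟩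
          have := (Finset.mem_inter.1 (h hx)).2
          simpa [cellSupport] using this
      · intro F _; rfl
    have hiff : ((C \ D) ∩ cellSupport b j = ∅) ↔ (∀ γ ∈ C \ D, j γ = b γ) := by
      constructor
      · intro he γ hγ
        by_contra hne
        have hmem : γ ∈ (C \ D) ∩ cellSupport b j :=
          Finset.mem_inter.2 ⟨hγ, by simp [cellSupport, hne]⟩
        simp [he] at hmem
      · intro h
        ext γ
        simp only [Finset.mem_inter, cellSupport, Finset.mem_filter, Finset.mem_univ,
          true_and, Finset.notMem_empty, iff_false, not_and, not_not]
        exact fun hγ => h γ hγ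
    rw [this, real_sum_powerset_neg_one_pow_card]
    by_cases h : (C \ D) ∩ cellSupport b j = ∅
    · rw [if_pos h, if_pos (hiff.1 h)]
    · rw [if_neg h, if_neg (fun hh => h (hiff.2 hh))]
  rw [Finset.sum_congr rfl hpt]
  simp only [ite_mul, one_mul, zero_mul]
  rw [← Finset.sum_filter, Finset.filter_filter]
end
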